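/- arXiv:2211.13383 — 8 statements merged into one kernel-verified Lean document; each statement's English description precedes it below -/
import Mathlib

section
/- Fix an integer n ≥ 1, real numbers σ_0 = 1, σ_1, …, σ_{2n} and ξ_1, …, ξ_{2n}, and let θ : ℝ → ℝ be Lebesgue-measurable with θ(x) > 0 for all x and ∫ (1+|x|^{2n}) θ(x) (1 + |log θ(x)| + log(1+|x|)) dx < ∞. For real polynomials P(x) = 1 + Σ_{k=1}^{2n} p_k x^k and Q(x) = Σ_{k=0}^{2n} q_k x^k, both of degree exactly 2n and strictly positive at every point of ℝ, define J(P,Q) = Σ_{k=0}^{2n} σ_k q_k − Σ_{k=1}^{2n} ξ_k p_k + ∫ P(x)θ(x) log(P(x)θ(x)/Q(x)) dx − ∫ P(x)θ(x) dx. Then: (i) for each k ∈ {1,…,2n}, the map ε ↦ J(P + ε x^k, Q) is well defined for ε in a neighborhood of 0 and is differentiable at ε = 0 with derivative −ξ_k + ∫ x^k θ(x) log(P(x)θ(x)/Q(x)) dx; and (ii) for each k ∈ {0,…,2n}, the map ε ↦ J(P, Q + ε x^k) is well defined for ε in a neighborhood of 0 and is differentiable at ε = 0 with derivative σ_k − ∫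 x^k P(x)θ(x)/Q(x) dx. -/
/-!
A positive polynomial of degree `m` lies between two positive multiples of `1 + |x| ^ m`, and so
do its perturbations `P + ε U` (`deg U ≤ m`) for small `ε`, with constants uniform in `ε`. For
two such functions `p, q` the ratio `p / q` is bounded above and below by positive constants, so
`|log (p θ / q)| ≤ K + |log θ|`. Hence the integrand `p θ log (p θ / q) - p θ` of `J` and its
`ε`-derivative `θ U log (p θ / q) - V p θ / q` are dominated, uniformly for small `ε`, by a
multiple of `(1 + |x| ^ 2n) θ (1 + |log θ| + log (1 + |x|))`, which is integrable by hypothesis.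
Differentiation under the integral sign gives the derivative of `J` along any direction `(U, V)`
with `deg U, deg V ≤ 2n`; the two claims are the directions `(x ^ k, 0)` and `(0, x ^ k)`.
-/

open MeasureTheory Polynomial Real

/-- The dual functional `J(P,Q)` of the Kullback–Leibler moment-matching problem. -/
noncomputable def dualJ (n : ℕ) (σ ξ : ℕ → ℝ) (θ : ℝ → ℝ) (P Q : Polynomial ℝ) : ℝ :=
  (∑ k ∈ Finset.range (2 * n + 1), σ k * Q.coeff k)
    - (∑ k ∈ Finset.Icc 1 (2 * n), ξ k * P.coeff k)
    + (∫ x : ℝ, P.eval x * θ x * Real.log (P.eval x * θ x / Q.eval x))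
    - ∫ x : ℝ, P.eval x * θ x

open Filter Topology

lemma abs_pow_le_one_add_abs_pow {k m : ℕ} (hk : k ≤ m) (x : ℝ) : |x| ^ k ≤ 1 + |x| ^ m := by
  rcases le_or_gt |x| 1 with hx | hx
  · linarith [pow_le_one₀ (abs_nonneg x) hx (n := k), pow_nonneg (abs_nonneg x) m]
  · linarith [pow_le_pow_right₀ hx.le hk]

namespace Polynomial

lemma abs_eval_le_mul_one_add_abs_pow {m : ℕ} {R : ℝ[X]} (hR : R.natDegree ≤ m) :
    ∃ A ≥ 0, ∀ x, |R.eval x| ≤ A * (1 + |x| ^ m) := by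
  refine ⟨∑ i ∈ Finset.range (R.natDegree + 1), |R.coeff i|, by positivity, fun x => ?_⟩
  rw [eval_eq_sum_range, Finset.sum_mul]
  refine (Finset.abs_sum_le_sum_abs _ _).trans (Finset.sum_le_sum fun i hi => ?_)
  rw [abs_mul, abs_pow]
  exact mul_le_mul_of_nonneg_left
    (abs_pow_le_one_add_abs_pow ((Finset.mem_range_succ_iff.mp hi).trans hR) x) (abs_nonneg _)

lemma leadingCoeff_pos_of_forall_eval_pos {R : ℝ[X]} (hR : ∀ x, 0 < R.eval x) :
    0 < R.leadingCoeff := by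
  rcases Nat.eq_zero_or_pos R.natDegree with h0 | hpos
  · rw [leadingCoeff, h0, coeff_zero_eq_eval_zero]
    exact hR 0
  by_contra! hlc
  obtain ⟨x, hx⟩ := ((R.tendsto_atBot_of_leadingCoeff_nonpos
    (natDegree_pos_iff_degree_pos.mp hpos) hlc).eventually (eventually_lt_atBot 0)).exists
  exact (hR x).not_gt hx

-- `R` is asymptotic to `lc R * (1 + x) ^ m`, and `1 + x ^ m ≤ 2 (1 + x) ^ m` for `x ≥ 0`.
lemma eventually_atTop_leadingCoeff_mul_le_eval (R : ℝ[X]) (hR : 0 < R.leadingCoeff) :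
    ∀ᶠ x in atTop, R.leadingCoeff / 4 * (1 + |x| ^ R.natDegree) ≤ R.eval x := by
  set m := R.natDegree
  have hT : ((X + C 1 : ℝ[X]) ^ m).Monic := (monic_X_add_C 1).pow m
  have hdeg : R.degree = ((X + C 1 : ℝ[X]) ^ m).degree := by
    rw [degree_pow, degree_X_add_C, nsmul_one, degree_eq_natDegree (leadingCoeff_ne_zero.mp hR.ne')]
  have hlim := R.div_tendsto_atTop_leadingCoeff_div_of_degree_eq _ hdeg
  rw [hT.leadingCoeff, div_one] at hlim
  filter_upwards [hlim.eventually (lt_mem_nhds (half_lt_self hR)), eventually_ge_atTop 0]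
    with x hx hx0
  simp only [eval_pow, eval_add, eval_X, eval_C] at hx
  have hpow : 0 < (x + 1) ^ m := by positivity
  rw [lt_div_iff₀ hpow] at hx
  have h1 : 1 ≤ (x + 1) ^ m := one_le_pow₀ (by linarith)
  have h2 : |x| ^ m ≤ (x + 1) ^ m := by
    rw [abs_of_nonneg hx0]; exact pow_le_pow_left₀ hx0 (by linarith) m
  nlinarith

lemma exists_pos_mul_one_add_abs_pow_le_eval {R : ℝ[X]} (hR : ∀ x, 0 < R.eval x) :
    ∃ c > 0, ∀ x, c * (1 + |x| ^ R.natDegree) ≤ R.eval x := by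
  set m := R.natDegree
  set R' := R.comp (-X)
  have hR' : ∀ x, R'.eval x = R.eval (-x) := fun x => by simp [R']
  have hdeg' : R'.natDegree = m := by simp [R', natDegree_comp, m]
  have hlc' : 0 < R'.leadingCoeff :=
    leadingCoeff_pos_of_forall_eval_pos fun x => (hR' x).symm ▸ hR (-x)
  set a := min (R.leadingCoeff / 4) (R'.leadingCoeff / 4)
  have ha : 0 < a := lt_min (by linarith [leadingCoeff_pos_of_forall_eval_pos hR]) (by linarith)
  have hfar : ∀ᶠ x in cocompact ℝ, a * (1 + |x| ^ m) ≤ R.eval x := by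
    rw [cocompact_eq_atBot_atTop, eventually_sup]
    constructor
    · filter_upwards [tendsto_neg_atBot_atTop.eventually
        (eventually_atTop_leadingCoeff_mul_le_eval R' hlc')] with x hx
      rw [hR', neg_neg, abs_neg, hdeg'] at hx
      exact le_trans (by gcongr; exact min_le_right _ _) hx
    · filter_upwards [eventually_atTop_leadingCoeff_mul_le_eval R
        (leadingCoeff_pos_of_forall_eval_pos hR)] with x hx
      exact le_trans (by gcongr; exact min_le_left _ _) hx
  -- `g` is continuous, positive, and equal to `a` near infinity, so it attains a positive minimum.
  set g : ℝ → ℝ := fun x => min (R.eval x / (1 + |x| ^ m)) a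
  have hg : Continuous g := by fun_prop (disch := intros; positivity)
  obtain ⟨x₀, hx₀⟩ := hg.exists_forall_le' 0 <| hfar.mono fun x hx =>
    (min_le_right _ _).trans (le_min ((le_div_iff₀ (by positivity)).mpr hx) le_rfl)
  refine ⟨g x₀, lt_min (div_pos (hR x₀) (by positivity)) ha, fun x => ?_⟩
  exact (le_div_iff₀ (by positivity)).mp ((hx₀ x).trans (min_le_left _ _))

end Polynomial

def ComparableToPow (m : ℕ) (a b : ℝ) (f : ℝ → ℝ) : Prop :=
  0 < a ∧ ∀ x, a * (1 + |x| ^ m) ≤ f x ∧ f x ≤ b * (1 + |x| ^ m)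

lemma Polynomial.exists_comparableToPow_eval {m : ℕ} {R : ℝ[X]} (hdeg : R.natDegree = m)
    (hR : ∀ x, 0 < R.eval x) : ∃ a b, ComparableToPow m a b R.eval := by
  obtain ⟨a, ha, hlow⟩ := exists_pos_mul_one_add_abs_pow_le_eval hR
  obtain ⟨b, -, hup⟩ := abs_eval_le_mul_one_add_abs_pow hdeg.le
  exact ⟨a, b, ha, fun x => ⟨hdeg ▸ hlow x, (le_abs_self _).trans (hup x)⟩⟩

namespace ComparableToPow

variable {m : ℕ} {a b a' b' : ℝ} {f g : ℝ → ℝ}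

lemma pos (hf : ComparableToPow m a b f) (x : ℝ) : 0 < f x :=
  lt_of_lt_of_le (by have := hf.1; positivity) (hf.2 x).1

lemma upper_pos (hf : ComparableToPow m a b f) : 0 < b := by
  have h := (hf.pos 0).trans_le (hf.2 0).2
  exact pos_of_mul_pos_left h (by positivity)

lemma div_le (hf : ComparableToPow m a b f) (hg : ComparableToPow m a' b' g) (x : ℝ) :
    f x / g x ≤ b / a' := by
  have hω : 0 < 1 + |x| ^ m := by positivity
  calc f x / g x ≤ b * (1 + |x| ^ m) / (a' * (1 + |x| ^ m)) :=
        div_le_div₀ (by linarith [hf.pos x, (hf.2 x).2]) (hf.2 x).2 (by have := hg.1; positivity)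
          (hg.2 x).1
    _ = b / a' := mul_div_mul_right _ _ hω.ne'

lemma abs_log_div_le (hf : ComparableToPow m a b f) (hg : ComparableToPow m a' b' g) (x : ℝ) :
    |log (f x / g x)| ≤ |log (b / a')| + |log (b' / a)| := by
  have hfg := div_pos (hf.pos x) (hg.pos x)
  have hup := log_le_log hfg (hf.div_le hg x)
  have hlow := log_le_log (div_pos (hg.pos x) (hf.pos x)) (hg.div_le hf x)
  rw [← inv_div, log_inv] at hlow
  rw [abs_le]
  constructor <;> linarith [le_abs_self (log (b / a')), le_abs_self (log (b' / a)),
    abs_nonneg (log (b / a')), abs_nonneg (log (b' / a))]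

lemma abs_log_mul_div_le (hf : ComparableToPow m a b f) (hg : ComparableToPow m a' b' g) {t : ℝ}
    (ht : 0 < t) (x : ℝ) :
    |log (f x * t / g x)| ≤ |log (b / a')| + |log (b' / a)| + |log t| := by
  rw [mul_div_right_comm, log_mul (div_pos (hf.pos x) (hg.pos x)).ne' ht.ne']
  exact (abs_add_le _ _).trans (by gcongr; exact hf.abs_log_div_le hg x)

lemma abs_mul_log_mul_div_le (hf : ComparableToPow m a b f) (hg : ComparableToPow m a' b' g)
    {t : ℝ} (ht : 0 < t) (x : ℝ) :
    |f x * t * log (f x * t / g x)|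
      ≤ (1 + |x| ^ m) * t * (b * (|log (b / a')| + |log (b' / a)|) + b * |log t|) := by
  rw [abs_mul, abs_of_pos (mul_pos (hf.pos x) ht)]
  calc f x * t * |log (f x * t / g x)|
      ≤ b * (1 + |x| ^ m) * t * (|log (b / a')| + |log (b' / a)| + |log t|) := by
        have := hf.upper_pos
        gcongr ?_ * t * ?_
        · exact (hf.2 x).2
        · exact hf.abs_log_mul_div_le hg ht x
    _ = _ := by ring

lemma abs_mul_log_mul_div_sub_le (hf : ComparableToPow m a b f) (hg : ComparableToPow m a' b' g)
    {u v : ℝ → ℝ} {A B : ℝ} (hu : ∀ x, |u x| ≤ A * (1 + |x| ^ m))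
    (hv : ∀ x, |v x| ≤ B * (1 + |x| ^ m)) {t : ℝ} (ht : 0 < t) (x : ℝ) :
    |u x * t * log (f x * t / g x) - v x * (f x * t / g x)|
      ≤ (1 + |x| ^ m) * t *
        (A * (|log (b / a')| + |log (b' / a)|) + B * (b / a') + A * |log t|) := by
  have hlog : |u x * t * log (f x * t / g x)|
      ≤ A * (1 + |x| ^ m) * t * (|log (b / a')| + |log (b' / a)| + |log t|) := by
    rw [abs_mul, abs_mul, abs_of_pos ht]
    exact mul_le_mul (mul_le_mul_of_nonneg_right (hu x) ht.le) (hf.abs_log_mul_div_le hg ht x)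
      (abs_nonneg _) (mul_nonneg ((abs_nonneg _).trans (hu x)) ht.le)
  have hratio : |v x * (f x * t / g x)| ≤ B * (1 + |x| ^ m) * (b / a' * t) := by
    rw [mul_div_right_comm, abs_mul, abs_of_pos (mul_pos (div_pos (hf.pos x) (hg.pos x)) ht)]
    exact mul_le_mul (hv x) (mul_le_mul_of_nonneg_right (hf.div_le hg x) ht.le)
      (by have := hf.pos x; have := hg.pos x; positivity) ((abs_nonneg _).trans (hv x))
  calc _ ≤ _ := abs_sub _ _
    _ ≤ _ := add_le_add hlog hratio
    _ = _ := by ring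

lemma eventually_add_C_mul {P U : ℝ[X]} (hP : ComparableToPow m a b P.eval)
    (hU : U.natDegree ≤ m) :
    ∀ᶠ ε in 𝓝 0, ComparableToPow m (a / 2) (b + a / 2) (P + Polynomial.C ε * U).eval := by
  obtain ⟨A, -, hA⟩ := Polynomial.abs_eval_le_mul_one_add_abs_pow hU
  have hsmall : ∀ᶠ ε in 𝓝 (0 : ℝ), |ε| * A < a / 2 := by
    refine (Continuous.tendsto (by fun_prop) 0).eventually (gt_mem_nhds ?_)
    simpa using half_pos hP.1
  filter_upwards [hsmall] with ε hε
  refine ⟨half_pos hP.1, fun x => ?_⟩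
  have hω : 0 ≤ 1 + |x| ^ m := by positivity
  have hεU : |ε * U.eval x| ≤ a / 2 * (1 + |x| ^ m) := by
    rw [abs_mul]
    calc |ε| * |U.eval x| ≤ |ε| * (A * (1 + |x| ^ m)) :=
          mul_le_mul_of_nonneg_left (hA x) (abs_nonneg ε)
      _ ≤ a / 2 * (1 + |x| ^ m) := by rw [← mul_assoc]; exact mul_le_mul_of_nonneg_right hε.le hω
  have := abs_le.mp hεU
  simp only [eval_add, eval_mul, eval_C]
  constructor <;> linarith [hP.2 x]

end ComparableToPow

lemma hasDerivAt_mul_log_div_sub {f g : ℝ → ℝ} {f' g' t : ℝ} (hf : HasDerivAt f f' t)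
    (hg : HasDerivAt g g' t) (hft : 0 < f t) (hgt : 0 < g t) :
    HasDerivAt (fun s => f s * log (f s / g s) - f s)
      (f' * log (f t / g t) - g' * (f t / g t)) t := by
  have hlog := (hf.fun_div hg hgt.ne').log (div_pos hft hgt).ne'
  refine ((hf.fun_mul hlog).fun_sub hf).congr_deriv ?_
  field_simp
  ring

lemma Polynomial.hasDerivAt_eval_add_C_mul (P U : ℝ[X]) (x ε : ℝ) :
    HasDerivAt (fun e => (P + C e * U).eval x) (U.eval x) ε := by
  simp only [eval_add, eval_mul, eval_C]
  simpa using ((hasDerivAt_id ε).mul_const (U.eval x)).const_add (P.eval x)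

noncomputable def dualIntegrand (θ : ℝ → ℝ) (P Q : ℝ[X]) (x : ℝ) : ℝ :=
  P.eval x * θ x * log (P.eval x * θ x / Q.eval x) - P.eval x * θ x

section Integrals

variable {θ : ℝ → ℝ} {m : ℕ}

lemma one_add_abs_pow_mul_le {t : ℝ} (ht : 0 ≤ t) (x : ℝ) {α β : ℝ} (hα : 0 ≤ α) (hβ : 0 ≤ β) :
    (1 + |x| ^ m) * t * (α + β * |log t|)
      ≤ (α + β) * ((1 + |x| ^ m) * t * (1 + |log t| + log (1 + |x|))) := by
  have hlog : 0 ≤ log (1 + |x|) := log_nonneg (by linarith [abs_nonneg x])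
  have : α + β * |log t| ≤ (α + β) * (1 + |log t| + log (1 + |x|)) := by
    nlinarith [abs_nonneg (log t)]
  calc _ ≤ (1 + |x| ^ m) * t * ((α + β) * (1 + |log t| + log (1 + |x|))) := by gcongr
    _ = _ := by ring

variable (hθpos : ∀ x, 0 < θ x)
  (hθint : Integrable fun x => (1 + |x| ^ m) * θ x * (1 + |log (θ x)| + log (1 + |x|)))
include hθpos hθint

lemma integrable_of_abs_le {f : ℝ → ℝ} (hf : AEStronglyMeasurable f) {α β : ℝ} (hα : 0 ≤ α)
    (hβ : 0 ≤ β) (hbound : ∀ x, |f x| ≤ (1 + |x| ^ m) * θ x * (α + β * |log (θ x)|)) :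
    Integrable f :=
  (hθint.const_mul (α + β)).mono' hf <| Eventually.of_forall fun x =>
    (hbound x).trans (one_add_abs_pow_mul_le (hθpos x).le x hα hβ)

variable (hθmeas : Measurable θ)
include hθmeas

lemma integrable_eval_mul {a b : ℝ} {P : ℝ[X]} (hP : ComparableToPow m a b P.eval) :
    Integrable fun x => P.eval x * θ x := by
  refine integrable_of_abs_le hθpos hθint (Measurable.aestronglyMeasurable (by fun_prop))
    hP.upper_pos.le le_rfl fun x => ?_
  rw [abs_of_pos (mul_pos (hP.pos x) (hθpos x)), zero_mul, add_zero]
  nlinarith [mul_le_mul_of_nonneg_right (hP.2 x).2 (hθpos x).le]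

lemma integrable_eval_mul_log {a b a' b' : ℝ} {P Q : ℝ[X]} (hP : ComparableToPow m a b P.eval)
    (hQ : ComparableToPow m a' b' Q.eval) :
    Integrable fun x => P.eval x * θ x * log (P.eval x * θ x / Q.eval x) :=
  integrable_of_abs_le hθpos hθint (Measurable.aestronglyMeasurable (by fun_prop))
    (by have := hP.upper_pos; positivity) hP.upper_pos.le
    fun x => hP.abs_mul_log_mul_div_le hQ (hθpos x) x

theorem hasDerivAt_integral_dualIntegrand {a b a' b' : ℝ} {P Q U V : ℝ[X]}
    (hP : ComparableToPow m a b P.eval) (hQ : ComparableToPow m a' b' Q.eval)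
    (hU : U.natDegree ≤ m) (hV : V.natDegree ≤ m) :
    HasDerivAt (fun ε => ∫ x, dualIntegrand θ (P + C ε * U) (Q + C ε * V) x)
      (∫ x, U.eval x * θ x * log (P.eval x * θ x / Q.eval x)
        - V.eval x * (P.eval x * θ x / Q.eval x)) 0 := by
  obtain ⟨A, hA, hUA⟩ := abs_eval_le_mul_one_add_abs_pow hU
  obtain ⟨B, hB, hVB⟩ := abs_eval_le_mul_one_add_abs_pow hV
  set s := {ε : ℝ | ComparableToPow m (a / 2) (b + a / 2) (P + C ε * U).eval ∧
    ComparableToPow m (a' / 2) (b' + a' / 2) (Q + C ε * V).eval}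
  have hs : s ∈ 𝓝 0 := (hP.eventually_add_C_mul hU).and (hQ.eventually_add_C_mul hV)
  obtain ⟨hP₀, hQ₀⟩ : 0 ∈ s := mem_of_mem_nhds hs
  set K := |log ((b + a / 2) / (a' / 2))| + |log ((b' + a' / 2) / (a / 2))|
  have hR : 0 ≤ (b + a / 2) / (a' / 2) := div_nonneg hP₀.upper_pos.le hQ₀.1.le
  have h := hasDerivAt_integral_of_dominated_loc_of_deriv_le (μ := volume) hs
    (F := fun ε => dualIntegrand θ (P + C ε * U) (Q + C ε * V))
    (F' := fun ε x => U.eval x * θ x * log ((P + C ε * U).eval x * θ x / (Q + C ε * V).eval x)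
      - V.eval x * ((P + C ε * U).eval x * θ x / (Q + C ε * V).eval x))
    (bound := fun x => (A * K + B * ((b + a / 2) / (a' / 2)) + A) *
      ((1 + |x| ^ m) * θ x * (1 + |log (θ x)| + log (1 + |x|))))
    (Eventually.of_forall fun ε => Measurable.aestronglyMeasurable
      (by unfold dualIntegrand; fun_prop))
    ((integrable_eval_mul_log hθpos hθint hθmeas hP₀ hQ₀).sub
      (integrable_eval_mul hθpos hθint hθmeas hP₀))
    (Measurable.aestronglyMeasurable (by fun_prop))
    (ae_of_all _ fun x ε hε => by
      rw [Real.norm_eq_abs]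
      exact (hε.1.abs_mul_log_mul_div_sub_le hε.2 hUA hVB (hθpos x) x).trans
        (one_add_abs_pow_mul_le (hθpos x).le x (by positivity) hA))
    (hθint.const_mul _)
    (ae_of_all _ fun x ε hε => hasDerivAt_mul_log_div_sub
      ((hasDerivAt_eval_add_C_mul P U x ε).mul_const (θ x))
      (hasDerivAt_eval_add_C_mul Q V x ε) (mul_pos (hε.1.pos x) (hθpos x)) (hε.2.pos x))
  simpa only [map_zero, zero_mul, add_zero] using h.2

end Integrals

lemma hasDerivAt_sum_mul_coeff_add_C_mul (s : Finset ℕ) (w : ℕ → ℝ) (R U : ℝ[X]) (ε : ℝ) :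
    HasDerivAt (fun e => ∑ k ∈ s, w k * (R + C e * U).coeff k) (∑ k ∈ s, w k * U.coeff k) ε := by
  refine HasDerivAt.fun_sum fun k _ => ?_
  simp only [coeff_add, coeff_C_mul]
  simpa using (((hasDerivAt_id ε).mul_const (U.coeff k)).const_add (R.coeff k)).const_mul (w k)

lemma dualJ_eq_add_integral_dualIntegrand {n : ℕ} {σ ξ : ℕ → ℝ} {θ : ℝ → ℝ} {P Q : ℝ[X]}
    (hlog : Integrable fun x => P.eval x * θ x * log (P.eval x * θ x / Q.eval x))
    (hmass : Integrable fun x => P.eval x * θ x) :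
    dualJ n σ ξ θ P Q = (∑ k ∈ Finset.range (2 * n + 1), σ k * Q.coeff k)
      - (∑ k ∈ Finset.Icc 1 (2 * n), ξ k * P.coeff k) + ∫ x, dualIntegrand θ P Q x := by
  rw [dualJ, add_sub_assoc, ← integral_sub hlog hmass]
  rfl

theorem hasDerivAt_dualJ_add_C_mul {n : ℕ} {σ ξ : ℕ → ℝ} {θ : ℝ → ℝ} (hθpos : ∀ x, 0 < θ x)
    (hθint : Integrable fun x => (1 + |x| ^ (2 * n)) * θ x * (1 + |log (θ x)| + log (1 + |x|)))
    (hθmeas : Measurable θ) {a b a' b' : ℝ} {P Q U V : ℝ[X]}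
    (hP : ComparableToPow (2 * n) a b P.eval) (hQ : ComparableToPow (2 * n) a' b' Q.eval)
    (hU : U.natDegree ≤ 2 * n) (hV : V.natDegree ≤ 2 * n) :
    HasDerivAt (fun ε => dualJ n σ ξ θ (P + C ε * U) (Q + C ε * V))
      ((∑ k ∈ Finset.range (2 * n + 1), σ k * V.coeff k)
        - (∑ k ∈ Finset.Icc 1 (2 * n), ξ k * U.coeff k)
        + ∫ x, U.eval x * θ x * log (P.eval x * θ x / Q.eval x)
          - V.eval x * (P.eval x * θ x / Q.eval x)) 0 := by
  have hJ : (fun ε => dualJ n σ ξ θ (P + C ε * U) (Q + C ε * V)) =ᶠ[𝓝 0] fun ε =>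
      (∑ k ∈ Finset.range (2 * n + 1), σ k * (Q + C ε * V).coeff k)
        - (∑ k ∈ Finset.Icc 1 (2 * n), ξ k * (P + C ε * U).coeff k)
        + ∫ x, dualIntegrand θ (P + C ε * U) (Q + C ε * V) x := by
    filter_upwards [hP.eventually_add_C_mul hU, hQ.eventually_add_C_mul hV] with ε hPε hQε
    exact dualJ_eq_add_integral_dualIntegrand (integrable_eval_mul_log hθpos hθint hθmeas hPε hQε)
      (integrable_eval_mul hθpos hθint hθmeas hPε)
  refine HasDerivAt.congr_of_eventuallyEq ?_ hJ
  exact ((hasDerivAt_sum_mul_coeff_add_C_mul _ σ Q V 0).sub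
    (hasDerivAt_sum_mul_coeff_add_C_mul _ ξ P U 0)).add
    (hasDerivAt_integral_dualIntegrand hθpos hθint hθmeas hP hQ hU hV)

theorem dualJ_directional_derivatives_general
    (n : ℕ)
    (σ ξ : ℕ → ℝ)
    (θ : ℝ → ℝ) (hθmeas : Measurable θ) (hθpos : ∀ x, 0 < θ x)
    (hθint : Integrable (fun x : ℝ =>
      (1 + |x| ^ (2 * n)) * θ x * (1 + |Real.log (θ x)| + Real.log (1 + |x|))))
    (P Q : Polynomial ℝ)
    (hPdeg : P.natDegree = 2 * n) (hQdeg : Q.natDegree = 2 * n)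
    (hPpos : ∀ x : ℝ, 0 < P.eval x) (hQpos : ∀ x : ℝ, 0 < Q.eval x) :
    (∀ k ∈ Finset.Icc 1 (2 * n), ∃ δ > (0 : ℝ),
      (∀ ε : ℝ, |ε| < δ →
        (∀ x : ℝ, 0 < (P + Polynomial.C ε * Polynomial.X ^ k).eval x) ∧
        Integrable (fun x : ℝ => (P + Polynomial.C ε * Polynomial.X ^ k).eval x * θ x *
          Real.log ((P + Polynomial.C ε * Polynomial.X ^ k).eval x * θ x / Q.eval x)) ∧
        Integrable (fun x : ℝ => (P + Polynomial.C ε * Polynomial.X ^ k).eval x * θ x)) ∧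
      HasDerivAt (fun ε : ℝ => dualJ n σ ξ θ (P + Polynomial.C ε * Polynomial.X ^ k) Q)
        (-ξ k + ∫ x : ℝ, x ^ k * θ x * Real.log (P.eval x * θ x / Q.eval x)) 0) ∧
    (∀ k ∈ Finset.range (2 * n + 1), ∃ δ > (0 : ℝ),
      (∀ ε : ℝ, |ε| < δ →
        (∀ x : ℝ, 0 < (Q + Polynomial.C ε * Polynomial.X ^ k).eval x) ∧
        Integrable (fun x : ℝ => P.eval x * θ x *
          Real.log (P.eval x * θ x / (Q + Polynomial.C ε * Polynomial.X ^ k).eval x)) ∧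
        Integrable (fun x : ℝ => P.eval x * θ x)) ∧
      HasDerivAt (fun ε : ℝ => dualJ n σ ξ θ P (Q + Polynomial.C ε * Polynomial.X ^ k))
        (σ k - ∫ x : ℝ, x ^ k * (P.eval x * θ x / Q.eval x)) 0) := by
  obtain ⟨a, b, hP⟩ := exists_comparableToPow_eval hPdeg hPpos
  obtain ⟨a', b', hQ⟩ := exists_comparableToPow_eval hQdeg hQpos
  have hJ (U V : ℝ[X]) := hasDerivAt_dualJ_add_C_mul (σ := σ) (ξ := ξ) (U := U) (V := V)
    hθpos hθint hθmeas hP hQ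
  have h0 : (0 : ℝ[X]).natDegree ≤ 2 * n := by simp
  refine ⟨fun k hk => ?_, fun k hk => ?_⟩
  · have hXk : (X ^ k : ℝ[X]).natDegree ≤ 2 * n := by simpa using (Finset.mem_Icc.mp hk).2
    obtain ⟨δ, hδ, hball⟩ := Metric.eventually_nhds_iff.mp (hP.eventually_add_C_mul hXk)
    refine ⟨δ, hδ, fun ε hε => ?_, by simpa [hk] using hJ _ _ hXk h0⟩
    have hPε := hball (by simpa using hε)
    exact ⟨hPε.pos, integrable_eval_mul_log hθpos hθint hθmeas hPε hQ,
      integrable_eval_mul hθpos hθint hθmeas hPε⟩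
  · have hXk : (X ^ k : ℝ[X]).natDegree ≤ 2 * n := by
      simpa [Nat.lt_succ_iff] using Finset.mem_range.mp hk
    obtain ⟨δ, hδ, hball⟩ := Metric.eventually_nhds_iff.mp (hQ.eventually_add_C_mul hXk)
    refine ⟨δ, hδ, fun ε hε => ?_, by simpa [hk, integral_neg, sub_eq_add_neg] using hJ _ _ h0 hXk⟩
    have hQε := hball (by simpa using hε)
    exact ⟨hQε.pos, integrable_eval_mul_log hθpos hθint hθmeas hP hQε,
      integrable_eval_mul hθpos hθint hθmeas hP⟩

/-- Partial derivatives of the dual functional `J` with respect to the coefficients of the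
positive polynomials `P` and `Q`: perturbing `P` in the direction `x^k` (k = 1,…,2n) gives
derivative `−ξ_k + ∫ x^k θ log(Pθ/Q)`, and perturbing `Q` in the direction `x^k`
(k = 0,…,2n) gives derivative `σ_k − ∫ x^k Pθ/Q`. -/
theorem dualJ_directional_derivatives
    (n : ℕ) (hn : 1 ≤ n)
    (σ ξ : ℕ → ℝ) (hσ0 : σ 0 = 1)
    (θ : ℝ → ℝ) (hθmeas : Measurable θ) (hθpos : ∀ x, 0 < θ x)
    (hθint : Integrable (fun x : ℝ =>
      (1 + |x| ^ (2 * n)) * θ x * (1 + |Real.log (θ x)| + Real.log (1 + |x|))))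
    (P Q : Polynomial ℝ)
    (hP0 : P.coeff 0 = 1)
    (hPdeg : P.natDegree = 2 * n) (hQdeg : Q.natDegree = 2 * n)
    (hPpos : ∀ x : ℝ, 0 < P.eval x) (hQpos : ∀ x : ℝ, 0 < Q.eval x) :
    (∀ k ∈ Finset.Icc 1 (2 * n), ∃ δ > (0 : ℝ),
      (∀ ε : ℝ, |ε| < δ →
        (∀ x : ℝ, 0 < (P + Polynomial.C ε * Polynomial.X ^ k).eval x) ∧
        Integrable (fun x : ℝ => (P + Polynomial.C ε * Polynomial.X ^ k).eval x * θ x *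
          Real.log ((P + Polynomial.C ε * Polynomial.X ^ k).eval x * θ x / Q.eval x)) ∧
        Integrable (fun x : ℝ => (P + Polynomial.C ε * Polynomial.X ^ k).eval x * θ x)) ∧
      HasDerivAt (fun ε : ℝ => dualJ n σ ξ θ (P + Polynomial.C ε * Polynomial.X ^ k) Q)
        (-ξ k + ∫ x : ℝ, x ^ k * θ x * Real.log (P.eval x * θ x / Q.eval x)) 0) ∧
    (∀ k ∈ Finset.range (2 * n + 1), ∃ δ > (0 : ℝ),
      (∀ ε : ℝ, |ε| < δ →
        (∀ x : ℝ, 0 < (Q + Polynomial.C ε * Polynomial.X ^ k).eval x) ∧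
        Integrable (fun x : ℝ => P.eval x * θ x *
          Real.log (P.eval x * θ x / (Q + Polynomial.C ε * Polynomial.X ^ k).eval x)) ∧
        Integrable (fun x : ℝ => P.eval x * θ x)) ∧
      HasDerivAt (fun ε : ℝ => dualJ n σ ξ θ P (Q + Polynomial.C ε * Polynomial.X ^ k))
        (σ k - ∫ x : ℝ, x ^ k * (P.eval x * θ x / Q.eval x)) 0) :=
  dualJ_directional_derivatives_general n σ ξ θ hθmeas hθpos hθint P Q hPdeg hQdeg hPpos hQpos
end

section
/- Fix an integer n ≥ 1. Let ψ and Q be real polynomials strictly positive at every point of ℝ, with deg ψ ≤ 2n and deg Q = 2n, and let θ : ℝ → ℝ be Lebesgue-measurable with θ(x) > 0 for all x and ∫ (1+|x|^{2n}) θ(x) dx < ∞. Then the linear map H_ψ : V_{2n−1} → ℝ^{2n} defined by H_ψ(u) = ( ∫_ℝ x^k u(x) ψ(x) θ(x)/Q(x)² dx )_{k=0}^{2n−1} is a linear bijection. -/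
open MeasureTheory Polynomial Real
open Filter


lemma poly_abs_le (p : Polynomial ℝ) :
    ∃ C : ℝ, 0 ≤ C ∧ ∀ x : ℝ, |p.eval x| ≤ C * (1 + |x|) ^ p.natDegree := by
  refine ⟨∑ i ∈ Finset.range (p.natDegree + 1), |p.coeff i|, Finset.sum_nonneg fun _ _ => abs_nonneg _, fun x => ?_⟩
  rw [Polynomial.eval_eq_sum_range, Finset.sum_mul]
  refine (Finset.abs_sum_le_sum_abs _ _).trans (Finset.sum_le_sum fun i hi => ?_)
  rw [abs_mul, abs_pow]
  have h1 : (1:ℝ) ≤ 1 + |x| := le_add_of_nonneg_right (abs_nonneg x)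
  calc |p.coeff i| * |x| ^ i
      ≤ |p.coeff i| * (1 + |x|) ^ i := by
        exact mul_le_mul_of_nonneg_left
          (pow_le_pow_left₀ (abs_nonneg x) (le_add_of_nonneg_left zero_le_one) i) (abs_nonneg _)
    _ ≤ |p.coeff i| * (1 + |x|) ^ p.natDegree :=
        mul_le_mul_of_nonneg_left
          (pow_le_pow_right₀ h1 (Nat.lt_succ_iff.mp (Finset.mem_range.mp hi))) (abs_nonneg _)


lemma poly_lead_pos (S : Polynomial ℝ) (hpos : ∀ x, 0 < S.eval x) (hdeg : 0 < S.degree) :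
    0 < S.leadingCoeff := by
  by_contra h
  push_neg at h
  have := Polynomial.tendsto_atBot_of_leadingCoeff_nonpos S hdeg h
  obtain ⟨x, hx⟩ := (this.eventually (eventually_le_atBot (-1 : ℝ))).exists
  linarith [hpos x]

lemma poly_atTop_bound (m : ℕ) (hm : 0 < m) (S : Polynomial ℝ)
    (hpos : ∀ x, 0 < S.eval x) (hdeg : S.natDegree = m) :
    ∃ ε : ℝ, 0 < ε ∧ ∃ R : ℝ, 0 ≤ R ∧ ∀ x : ℝ, R ≤ x → ε * (1 + x) ^ m ≤ S.eval x := by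
  have hS0 : S ≠ 0 := fun h => by simpa [h] using hpos 0
  have hdegS : S.degree = (m : ℕ) := by
    rw [Polynomial.degree_eq_natDegree hS0, hdeg]
  have hdpos : 0 < S.degree := by rw [hdegS]; exact_mod_cast hm
  have hc : 0 < S.leadingCoeff := poly_lead_pos S hpos hdpos
  set D : Polynomial ℝ := (1 + Polynomial.X) ^ m with hD
  have hDdeg : D.degree = (m : ℕ) := by
    rw [hD, Polynomial.degree_pow]
    have : (1 + Polynomial.X : Polynomial ℝ).degree = 1 := by
      simpa [add_comm] using Polynomial.degree_X_add_C (1 : ℝ)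
    rw [this]; simp
  have hDlead : D.leadingCoeff = 1 := by
    rw [hD, Polynomial.leadingCoeff_pow]
    have : (1 + Polynomial.X : Polynomial ℝ).leadingCoeff = 1 := by
      simpa [add_comm] using Polynomial.leadingCoeff_X_add_C (1 : ℝ)
    rw [this, one_pow]
  have htend : Tendsto (fun x => S.eval x / D.eval x) atTop (nhds (S.leadingCoeff / 1)) := by
    rw [← hDlead]
    exact Polynomial.div_tendsto_leadingCoeff_div_of_degree_eq (P := S) (Q := D) (by rw [hdegS, hDdeg])
  rw [div_one] at htend
  have hev : ∀ᶠ x in atTop, S.leadingCoeff / 2 < S.eval x / D.eval x :=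
    htend.eventually (eventually_gt_nhds (half_lt_self hc))
  obtain ⟨R, hR⟩ := (hev.and (eventually_ge_atTop (0:ℝ))).exists_forall_of_atTop
  refine ⟨S.leadingCoeff / 2, half_pos hc, max R 0, le_max_right _ _, fun x hx => ?_⟩
  have hx0 : (0:ℝ) ≤ x := le_trans (le_max_right _ _) hx
  have hxR : R ≤ x := le_trans (le_max_left _ _) hx
  obtain ⟨h1, _⟩ := hR x hxR
  have hDx : D.eval x = (1 + x) ^ m := by simp [hD]
  have hDpos : 0 < (1 + x) ^ m := by positivity
  rw [hDx] at h1
  calc S.leadingCoeff / 2 * (1 + x) ^ m ≤ (S.eval x / (1+x)^m) * (1+x)^m := by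
        exact mul_le_mul_of_nonneg_right h1.le hDpos.le
    _ = S.eval x := by field_simp


lemma poly_lower_bound (m : ℕ) (hm : 0 < m) (Q : Polynomial ℝ)
    (hpos : ∀ x, 0 < Q.eval x) (hdeg : Q.natDegree = m) :
    ∃ ε : ℝ, 0 < ε ∧ ∀ x : ℝ, ε * (1 + |x|) ^ m ≤ Q.eval x := by
  obtain ⟨ε₁, hε₁, R₁, hR₁, h₁⟩ := poly_atTop_bound m hm Q hpos hdeg
  set Q₂ : Polynomial ℝ := Q.comp (-Polynomial.X) with hQ₂
  have hQ₂eval : ∀ x : ℝ, Q₂.eval x = Q.eval (-x) := by intro x; simp [hQ₂]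
  have hQ₂pos : ∀ x, 0 < Q₂.eval x := fun x => by rw [hQ₂eval]; exact hpos _
  have hQ₂deg : Q₂.natDegree = m := by
    rw [hQ₂, Polynomial.natDegree_comp]
    simp [hdeg]
  obtain ⟨ε₂, hε₂, R₂, hR₂, h₂⟩ := poly_atTop_bound m hm Q₂ hQ₂pos hQ₂deg
  set R := max R₁ R₂ with hR
  have hR0 : 0 ≤ R := le_trans hR₁ (le_max_left _ _)
  -- compact part
  have hcomp : IsCompact (Set.Icc (-R) R) := isCompact_Icc
  have hne : (Set.Icc (-R) R).Nonempty := ⟨0, by constructor <;> linarith⟩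
  obtain ⟨x₀, hx₀mem, hx₀min⟩ := hcomp.exists_isMinOn hne (Q.continuous_aeval.continuousOn)
  have hμ : 0 < Q.eval x₀ := hpos x₀
  set ε₃ : ℝ := Q.eval x₀ / (1 + R) ^ m with hε₃def
  have hε₃ : 0 < ε₃ := by positivity
  refine ⟨min ε₁ (min ε₂ ε₃), lt_min hε₁ (lt_min hε₂ hε₃), fun x => ?_⟩
  have key : ∃ ε' ∈ ({ε₁, ε₂, ε₃} : Set ℝ), ε' * (1 + |x|) ^ m ≤ Q.eval x := by
    rcases le_or_gt x (-R) with hx | hx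
    · refine ⟨ε₂, by simp, ?_⟩
      have : R₂ ≤ -x := le_trans (le_max_right _ _) (by linarith)
      have := h₂ (-x) this
      rw [hQ₂eval, neg_neg] at this
      rwa [abs_of_nonpos (by linarith)]
    · rcases le_or_gt R x with hx' | hx'
      · refine ⟨ε₁, by simp, ?_⟩
        have := h₁ x (le_trans (le_max_left _ _) hx')
        rwa [abs_of_nonneg (by linarith)]
      · refine ⟨ε₃, by simp, ?_⟩
        have hxm : x ∈ Set.Icc (-R) R := ⟨hx.le, hx'.le⟩
        have habs : |x| ≤ R := abs_le.mpr ⟨hx.le, hx'.le⟩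
        calc ε₃ * (1 + |x|) ^ m ≤ ε₃ * (1 + R) ^ m := by
              have := pow_le_pow_left₀ (by positivity) (by linarith : 1 + |x| ≤ 1 + R) m
              exact mul_le_mul_of_nonneg_left this hε₃.le
          _ = Q.eval x₀ := by rw [hε₃def]; field_simp
          _ ≤ Q.eval x := hx₀min hxm
  obtain ⟨ε', hε'mem, hε'le⟩ := key
  refine le_trans (mul_le_mul_of_nonneg_right ?_ (by positivity)) hε'le
  rcases hε'mem with h | h | h
  · rw [h]; exact min_le_left _ _
  · rw [h]; exact le_trans (min_le_right _ _) (min_le_left _ _)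
  · rw [h]; exact le_trans (min_le_right _ _) (min_le_right _ _)


lemma one_add_abs_pow_le (x : ℝ) (m : ℕ) :
    (1 + |x|) ^ m ≤ 2 ^ m * (1 + |x| ^ m) := by
  have h1 : 1 + |x| ≤ 2 * max 1 |x| := by
    rcases le_total |x| 1 with h | h
    · rw [max_eq_left h]; linarith
    · rw [max_eq_right h]; linarith
  have h2 : (1 + |x|) ^ m ≤ (2 * max 1 |x|) ^ m :=
    pow_le_pow_left₀ (by positivity) h1 m
  rw [mul_pow] at h2
  refine h2.trans ?_
  have h3 : (max 1 |x|) ^ m ≤ 1 + |x| ^ m := by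
    rcases le_total |x| 1 with h | h
    · rw [max_eq_left h, one_pow]
      have : 0 ≤ |x| ^ m := by positivity
      linarith
    · rw [max_eq_right h]
      have : 0 ≤ (1:ℝ) := zero_le_one
      linarith
  exact mul_le_mul_of_nonneg_left h3 (by positivity)

lemma integrable_poly_ratio (n : ℕ) (hn : 1 ≤ n) (Q : Polynomial ℝ)
    (hQpos : ∀ x : ℝ, 0 < Q.eval x) (hQdeg : Q.natDegree = 2 * n)
    (θ : ℝ → ℝ) (hθmeas : Measurable θ) (hθpos : ∀ x, 0 < θ x)
    (hθint : Integrable (fun x : ℝ => (1 + |x| ^ (2 * n)) * θ x))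
    (p : Polynomial ℝ) (hp : p.natDegree ≤ 3 * (2 * n)) :
    Integrable (fun x : ℝ => p.eval x * θ x / Q.eval x ^ 2) := by
  obtain ⟨C, hC, hCb⟩ := poly_abs_le p
  obtain ⟨ε, hε, hεb⟩ := poly_lower_bound (2 * n) (by omega) Q hQpos hQdeg
  set M : ℝ := C * 2 ^ (2 * n) / ε ^ 2 with hM
  have hmeas : Measurable fun x : ℝ => p.eval x * θ x / Q.eval x ^ 2 :=
    (p.continuous.measurable.mul hθmeas).div ((Q.continuous.pow 2).measurable)
  refine (hθint.const_mul M).mono' hmeas.aestronglyMeasurable (ae_of_all _ fun x => ?_)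
  have hq : 0 < Q.eval x := hQpos x
  have hθx : 0 ≤ θ x := (hθpos x).le
  have hbase : (1:ℝ) ≤ 1 + |x| := le_add_of_nonneg_right (abs_nonneg x)
  -- bound on |p.eval x|
  have hb1 : |p.eval x| ≤ C * (1 + |x|) ^ (3 * (2 * n)) :=
    (hCb x).trans (mul_le_mul_of_nonneg_left (pow_le_pow_right₀ hbase hp) hC)
  have hsplit : (1 + |x|) ^ (3 * (2 * n)) = (1 + |x|) ^ (2 * n) * ((1 + |x|) ^ (2 * n)) ^ 2 := by
    rw [← pow_mul, ← pow_add]; ring_nf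
  have hQ2 : ((1 + |x|) ^ (2 * n)) ^ 2 ≤ (Q.eval x / ε) ^ 2 := by
    have h : (1 + |x|) ^ (2 * n) ≤ Q.eval x / ε := by
      rw [le_div_iff₀ hε, mul_comm]; exact hεb x
    exact pow_le_pow_left₀ (by positivity) h 2
  have hb2 : |p.eval x| ≤ M * (1 + |x| ^ (2 * n)) * Q.eval x ^ 2 := by
    calc |p.eval x| ≤ C * ((1 + |x|) ^ (2 * n) * ((1 + |x|) ^ (2 * n)) ^ 2) := by
          rw [← hsplit]; exact hb1
      _ ≤ C * ((2 ^ (2 * n) * (1 + |x| ^ (2 * n))) * (Q.eval x / ε) ^ 2) := by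
          refine mul_le_mul_of_nonneg_left (mul_le_mul (one_add_abs_pow_le x (2*n)) hQ2
            (by positivity) (by positivity)) hC
      _ = M * (1 + |x| ^ (2 * n)) * Q.eval x ^ 2 := by
          rw [hM]; field_simp
  have hM0 : 0 ≤ M := by positivity
  have : ‖p.eval x * θ x / Q.eval x ^ 2‖ = |p.eval x| * θ x / Q.eval x ^ 2 := by
    rw [Real.norm_eq_abs, abs_div, abs_mul, abs_of_nonneg hθx, abs_of_pos (by positivity : (0:ℝ) < Q.eval x ^ 2)]
  rw [this, div_le_iff₀ (by positivity : (0:ℝ) < Q.eval x ^ 2)]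
  calc |p.eval x| * θ x ≤ (M * (1 + |x| ^ (2 * n)) * Q.eval x ^ 2) * θ x :=
        mul_le_mul_of_nonneg_right hb2 hθx
    _ = M * ((1 + |x| ^ (2 * n)) * θ x) * Q.eval x ^ 2 := by ring

/-- The linear map `H_ψ : V_{2n−1} → ℝ^{2n}`,
`H_ψ(u) = (∫ x^k u(x) ψ(x) θ(x)/Q(x)² dx)_{k=0}^{2n−1}`, is a linear bijection, where
`ψ` is a positive polynomial of degree at most `2n`, `Q` is a positive polynomial of degree
exactly `2n`, and `θ` is a positive density with `∫ (1+|x|^{2n}) θ(x) dx < ∞`. -/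

theorem Hpsi_linear_bijection
    (n : ℕ) (hn : 1 ≤ n)
    (ψ Q : Polynomial ℝ)
    (hψpos : ∀ x : ℝ, 0 < ψ.eval x) (hQpos : ∀ x : ℝ, 0 < Q.eval x)
    (hψdeg : ψ.natDegree ≤ 2 * n) (hQdeg : Q.natDegree = 2 * n)
    (θ : ℝ → ℝ) (hθmeas : Measurable θ) (hθpos : ∀ x, 0 < θ x)
    (hθint : Integrable (fun x : ℝ => (1 + |x| ^ (2 * n)) * θ x)) :
    ∃ H : (Polynomial.degreeLT ℝ (2 * n)) →ₗ[ℝ] (Fin (2 * n) → ℝ),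
      (∀ (u : Polynomial.degreeLT ℝ (2 * n)) (k : Fin (2 * n)),
        H u k = ∫ x : ℝ, x ^ (k : ℕ) * (u : Polynomial ℝ).eval x * ψ.eval x * θ x
          / (Q.eval x) ^ 2) ∧
      Function.Bijective H := by
  -- degree bound for elements of degreeLT
  have hund : ∀ u : Polynomial.degreeLT ℝ (2 * n), (u : Polynomial ℝ).natDegree ≤ 2 * n :=
    fun u => Polynomial.natDegree_le_iff_degree_le.mpr
      (le_of_lt (Polynomial.mem_degreeLT.mp u.2))
  -- integrability of the basic integrands
  have hint : ∀ (k : ℕ), k ≤ 2 * n → ∀ p : Polynomial ℝ, p.natDegree ≤ 2 * n →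
      Integrable (fun x : ℝ =>
        ((Polynomial.X ^ k * p * ψ).eval x) * θ x / Q.eval x ^ 2) := by
    intro k hk p hp
    refine integrable_poly_ratio n hn Q hQpos hQdeg θ hθmeas hθpos hθint _ ?_
    calc (Polynomial.X ^ k * p * ψ).natDegree
        ≤ (Polynomial.X ^ k * p).natDegree + ψ.natDegree := Polynomial.natDegree_mul_le
      _ ≤ (Polynomial.X ^ k : Polynomial ℝ).natDegree + p.natDegree + ψ.natDegree := by
          gcongr; exact Polynomial.natDegree_mul_le
      _ ≤ k + 2 * n + 2 * n := by
          simp only [Polynomial.natDegree_X_pow]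
          omega
      _ ≤ 3 * (2 * n) := by omega
  -- the linear map
  set H : (Polynomial.degreeLT ℝ (2 * n)) →ₗ[ℝ] (Fin (2 * n) → ℝ) :=
    { toFun := fun u k => ∫ x : ℝ,
        ((Polynomial.X ^ (k : ℕ) * (u : Polynomial ℝ) * ψ).eval x) * θ x / Q.eval x ^ 2
      map_add' := by
        intro u v
        funext k
        have h1 := hint k k.isLt.le (u : Polynomial ℝ) (hund u)
        have h2 := hint k k.isLt.le (v : Polynomial ℝ) (hund v)
        have : (fun x : ℝ =>
            ((Polynomial.X ^ (k : ℕ) * ((u : Polynomial ℝ) + (v : Polynomial ℝ)) * ψ).eval x)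
              * θ x / Q.eval x ^ 2)
            = (fun x : ℝ =>
              ((Polynomial.X ^ (k : ℕ) * (u : Polynomial ℝ) * ψ).eval x) * θ x / Q.eval x ^ 2
              + ((Polynomial.X ^ (k : ℕ) * (v : Polynomial ℝ) * ψ).eval x) * θ x / Q.eval x ^ 2) := by
          funext x
          simp only [Polynomial.eval_mul, Polynomial.eval_add, Polynomial.eval_pow,
            Polynomial.eval_X]
          ring
        simp only [Submodule.coe_add, Pi.add_apply]
        rw [this, integral_add h1 h2]
      map_smul' := by
        intro c u
        funext k
        simp only [Submodule.coe_smul, RingHom.id_apply, Pi.smul_apply, smul_eq_mul]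
        rw [← integral_const_mul]
        congr 1
        funext x
        simp only [Polynomial.eval_mul, Polynomial.eval_smul, Polynomial.eval_pow,
          Polynomial.eval_X, smul_eq_mul]
        ring } with hH
  have hHform : ∀ (u : Polynomial.degreeLT ℝ (2 * n)) (k : Fin (2 * n)),
      H u k = ∫ x : ℝ, x ^ (k : ℕ) * (u : Polynomial ℝ).eval x * ψ.eval x * θ x
        / (Q.eval x) ^ 2 := by
    intro u k
    simp only [hH, LinearMap.coe_mk, AddHom.coe_mk]
    congr 1
    funext x
    simp [Polynomial.eval_mul, Polynomial.eval_pow, Polynomial.eval_X]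
  -- injectivity
  have hinj : Function.Injective H := by
    rw [← LinearMap.ker_eq_bot]
    rw [LinearMap.ker_eq_bot']
    intro u hu
    by_contra hu0
    have hune : (u : Polynomial ℝ) ≠ 0 := fun h => hu0 (Subtype.ext h)
    have hlt : (u : Polynomial ℝ).natDegree < 2 * n :=
      (Polynomial.natDegree_lt_iff_degree_lt hune).mpr (Polynomial.mem_degreeLT.mp u.2)
    set g : ℝ → ℝ := fun x =>
      (((u : Polynomial ℝ) * (u : Polynomial ℝ) * ψ).eval x) * θ x / Q.eval x ^ 2 with hg
    have hgint : Integrable g := by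
      refine integrable_poly_ratio n hn Q hQpos hQdeg θ hθmeas hθpos hθint _ ?_
      refine le_trans Polynomial.natDegree_mul_le ?_
      have h2 : ((u : Polynomial ℝ) * (u : Polynomial ℝ)).natDegree ≤ 2 * n + 2 * n :=
        le_trans Polynomial.natDegree_mul_le (by have := hund u; omega)
      omega
    have hgnonneg : ∀ x, 0 ≤ g x := by
      intro x
      have : (((u : Polynomial ℝ) * (u : Polynomial ℝ) * ψ).eval x)
          = ((u : Polynomial ℝ).eval x) ^ 2 * ψ.eval x := by
        simp only [Polynomial.eval_mul]; ring
      rw [hg]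
      simp only [this]
      have := hψpos x; have := (hθpos x).le; have := hQpos x
      positivity
    -- expand g as a sum
    have hgsum : ∀ x : ℝ, g x = ∑ k ∈ Finset.range (2 * n),
        (u : Polynomial ℝ).coeff k *
          (((Polynomial.X ^ k * (u : Polynomial ℝ) * ψ).eval x) * θ x / Q.eval x ^ 2) := by
      intro x
      have heval : (u : Polynomial ℝ).eval x
          = ∑ k ∈ Finset.range (2 * n), (u : Polynomial ℝ).coeff k * x ^ k :=
        Polynomial.eval_eq_sum_range' hlt x
      have hterm : ∀ k, (u : Polynomial ℝ).coeff k *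
          (((Polynomial.X ^ k * (u : Polynomial ℝ) * ψ).eval x) * θ x / Q.eval x ^ 2)
          = ((u : Polynomial ℝ).coeff k * x ^ k) *
            ((u : Polynomial ℝ).eval x * ψ.eval x * θ x / Q.eval x ^ 2) := by
        intro k
        simp only [Polynomial.eval_mul, Polynomial.eval_pow, Polynomial.eval_X]
        ring
      simp only [hterm]
      rw [← Finset.sum_mul, ← heval, hg]
      simp only [Polynomial.eval_mul]
      ring
    have hgzero : ∫ x : ℝ, g x = 0 := by
      have : (fun x : ℝ => g x) = fun x : ℝ => ∑ k ∈ Finset.range (2 * n),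
          (u : Polynomial ℝ).coeff k *
            (((Polynomial.X ^ k * (u : Polynomial ℝ) * ψ).eval x) * θ x / Q.eval x ^ 2) := by
        funext x; exact hgsum x
      rw [this, integral_finset_sum]
      · refine Finset.sum_eq_zero fun k hk => ?_
        rw [integral_const_mul]
        have hk' : k < 2 * n := Finset.mem_range.mp hk
        have := congrFun hu ⟨k, hk'⟩
        simp only [hH, LinearMap.coe_mk, AddHom.coe_mk, Pi.zero_apply] at this
        rw [this, mul_zero]
      · intro k hk
        exact (hint k (Finset.mem_range.mp hk).le (u : Polynomial ℝ) (hund u)).const_mul _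
    have hgae : ∀ᵐ x : ℝ, g x = 0 := by
      have h := (integral_eq_zero_iff_of_nonneg hgnonneg hgint).mp hgzero
      filter_upwards [h] with x hx
      simpa using hx
    have hsub : {x : ℝ | (u : Polynomial ℝ).eval x ≠ 0} ⊆ {x : ℝ | g x ≠ 0} := by
      intro x hx
      have h1 : 0 < ((u : Polynomial ℝ).eval x) ^ 2 := pow_two_pos_of_ne_zero hx
      have hgpos : 0 < g x := by
        rw [hg]
        have heq : (((u : Polynomial ℝ) * (u : Polynomial ℝ) * ψ).eval x)
            = ((u : Polynomial ℝ).eval x) ^ 2 * ψ.eval x := by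
          simp only [Polynomial.eval_mul]; ring
        simp only [heq]
        exact div_pos (mul_pos (mul_pos h1 (hψpos x)) (hθpos x)) (pow_pos (hQpos x) 2)
      exact ne_of_gt hgpos
    have hnull : volume {x : ℝ | g x ≠ 0} = 0 := by
      simpa [ae_iff] using hgae
    have hnull2 : volume {x : ℝ | (u : Polynomial ℝ).eval x ≠ 0} = 0 :=
      measure_mono_null hsub hnull
    have hroots : volume {x : ℝ | (u : Polynomial ℝ).eval x = 0} = 0 :=
      (Polynomial.finite_setOf_isRoot hune).measure_zero volume
    have : volume (Set.univ : Set ℝ) ≤ 0 := by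
      have hcover : (Set.univ : Set ℝ) ⊆
          {x : ℝ | (u : Polynomial ℝ).eval x = 0} ∪ {x : ℝ | (u : Polynomial ℝ).eval x ≠ 0} := by
        intro x _; by_cases h : (u : Polynomial ℝ).eval x = 0
        · exact Or.inl h
        · exact Or.inr h
      calc volume (Set.univ : Set ℝ) ≤ volume ({x : ℝ | (u : Polynomial ℝ).eval x = 0}
            ∪ {x : ℝ | (u : Polynomial ℝ).eval x ≠ 0}) := measure_mono hcover
        _ ≤ volume {x : ℝ | (u : Polynomial ℝ).eval x = 0}
            + volume {x : ℝ | (u : Polynomial ℝ).eval x ≠ 0} := measure_union_le _ _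
        _ = 0 := by rw [hroots, hnull2, add_zero]
      
    rw [Real.volume_univ] at this
    simp at this
  -- surjectivity via finite dimension
  have hsurj : Function.Surjective H := by
    set e := Polynomial.degreeLTEquiv ℝ (2 * n) with he
    set L : (Fin (2 * n) → ℝ) →ₗ[ℝ] (Fin (2 * n) → ℝ) := H.comp e.symm.toLinearMap with hL
    have hLinj : Function.Injective L := by
      intro a b hab
      have := hinj hab
      exact e.symm.injective this
    have hLsurj : Function.Surjective L := LinearMap.injective_iff_surjective.mp hLinj
    intro y
    obtain ⟨v, hv⟩ := hLsurj y
    exact ⟨e.symm v, hv⟩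
  exact ⟨H, hHform, hinj, hsurj⟩
end

section
/- Fix an integer n ≥ 1 and k ∈ {0, 1, …, 2n}. Let P and Q be real polynomials of degree exactly 2n that are strictly positive at every point of ℝ, let u, v ∈ V_{2n−1}, and let θ : ℝ → ℝ be Lebesgue-measurable with θ(x) > 0 for all x and ∫ (1+|x|^{2n}) θ(x)(1 + |log θ(x)| + log(1+|x|)) dx < ∞. Then there exists δ > 0 such that for all ε with |ε| < δ the polynomials P + εu and Q + εv are strictly positive on ℝ and the function x ↦ x^k θ(x) log((P(x)+εu(x))θ(x)/(Q(x)+εv(x))) is Lebesgue integrable; moreover, the map ε ↦ ∫_ℝ x^k θ(x) log((P(x)+εu(x))θ(x)/(Q(x)+εv(x))) dx is differentiable at ε = 0 with derivative ∫_ℝ x^k ( u(x)/P(x) − v(x)/Q(x) ) θ(x) dx. -/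
/-!
Since `deg u ≤ deg P` and `P > 0` on `ℝ`, the continuous function `u / P` is bounded: it is `O(1)`
along the cocompact filter and bounded on compact sets. Hence `P / 2 ≤ P + ε u ≤ 2 P` for small
`|ε|`, so `log (P + ε u)` is `O(1 + log (1 + |x|))` and `u / (P + ε u)` is bounded, uniformly in
`ε`. Multiplied by `x ^ k θ`, both the integrand and its `ε`-derivative are then dominated by the
integrable weight `(1 + |x| ^ 2n) θ (1 + |log θ| + log (1 + |x|))`, and differentiation under the
integral sign applies.
-/

open MeasureTheory Polynomial Real Asymptotics Filter

theorem exists_norm_le_mul_norm_of_isBigO_cocompact {X 𝕜 : Type*} [TopologicalSpace X]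
    [NormedField 𝕜] {f g : X → 𝕜} (hf : Continuous f) (hg : Continuous g) (hg0 : ∀ x, g x ≠ 0)
    (h : f =O[cocompact X] g) : ∃ C, ∀ x, ‖f x‖ ≤ C * ‖g x‖ := by
  have hdiv : (fun x => f x / g x) =O[cocompact X] (1 : X → ℝ) :=
    ((h.mul (isBigO_refl (fun x => (g x)⁻¹) _)).congr (fun x => (div_eq_mul_inv _ _).symm)
      (fun x => mul_inv_cancel₀ (hg0 x))).trans (isBigO_const_const _ one_ne_zero _)
  obtain ⟨C, hC⟩ := isBounded_iff_forall_norm_le.1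
    ((hf.div hg hg0).isBounded_range_iff_isBigO.2 hdiv)
  refine ⟨C, fun x => ?_⟩
  have := hC _ ⟨x, rfl⟩
  rwa [Pi.div_apply, norm_div, div_le_iff₀ (norm_pos_iff.2 (hg0 x))] at this

theorem abs_log_le_mul_one_add_log {c C t y : ℝ} {d : ℕ} (hc : 0 < c) (hy : 0 ≤ y)
    (hct : c ≤ t) (htC : t ≤ C * (1 + y) ^ d) :
    |log t| ≤ (|log c| + |log C| + d) * (1 + log (1 + y)) := by
  have ht : 0 < t := hc.trans_le hct
  have hC : 0 < C := pos_of_mul_pos_left (ht.trans_le htC) (by positivity)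
  have hL : 0 ≤ log (1 + y) := log_nonneg (by linarith)
  have hlo : log c ≤ log t := log_le_log hc hct
  have hhi : log t ≤ log C + d * log (1 + y) := by
    calc log t ≤ log (C * (1 + y) ^ d) := log_le_log ht htC
      _ = log C + d * log (1 + y) := by rw [log_mul hC.ne' (by positivity), log_pow]
  rw [abs_le]
  constructor <;> nlinarith [abs_nonneg (log c), abs_nonneg (log C), neg_abs_le (log c),
    le_abs_self (log C), (Nat.cast_nonneg d : (0 : ℝ) ≤ d)]

theorem abs_log_mul_div_le {a b t A B L : ℝ} (ha : 0 < a) (hb : 0 < b) (ht : 0 < t) (hL : 0 ≤ L)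
    (hA : |log a| ≤ A * (1 + L)) (hB : |log b| ≤ B * (1 + L)) :
    |log (a * t / b)| ≤ (A + B + 1) * (1 + |log t| + L) := by
  rw [log_div (by positivity) hb.ne', log_mul ha.ne' ht.ne']
  have hA0 : 0 ≤ A := nonneg_of_mul_nonneg_left ((abs_nonneg _).trans hA) (by linarith)
  have hB0 : 0 ≤ B := nonneg_of_mul_nonneg_left ((abs_nonneg _).trans hB) (by linarith)
  calc |log a + log t - log b| ≤ |log a| + |log t| + |log b| :=
        (abs_sub _ _).trans (by gcongr; exact abs_add_le _ _)
    _ ≤ (A + B + 1) * (1 + |log t| + L) := by nlinarith [abs_nonneg (log t)]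

theorem pow_le_one_add_pow {a : ℝ} {k m : ℕ} (ha : 0 ≤ a) (hk : k ≤ m) : a ^ k ≤ 1 + a ^ m := by
  rcases le_total a 1 with h | h
  · linarith [pow_le_one₀ ha h (n := k), pow_nonneg ha m]
  · linarith [pow_le_pow_right₀ h hk]

theorem norm_pow_mul_mul_le {k m : ℕ} (hk : k ≤ m) {x t y C ℓ : ℝ} (ht : 0 < t)
    (hy : |y| ≤ C * ℓ) : ‖x ^ k * t * y‖ ≤ C * ((1 + |x| ^ m) * t * ℓ) := by
  rw [norm_mul, norm_mul, norm_pow, Real.norm_eq_abs, Real.norm_eq_abs, Real.norm_eq_abs,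
    abs_of_pos ht]
  calc |x| ^ k * t * |y| ≤ (1 + |x| ^ m) * t * (C * ℓ) := by
        gcongr
        exact pow_le_one_add_pow (abs_nonneg x) hk
    _ = C * ((1 + |x| ^ m) * t * ℓ) := by ring

theorem hasDerivAt_log_mul_div {p q : ℝ → ℝ} {p' q' t ε : ℝ} (hp : HasDerivAt p p' ε)
    (hq : HasDerivAt q q' ε) (hpε : 0 < p ε) (hqε : 0 < q ε) (ht : 0 < t) :
    HasDerivAt (fun e => log (p e * t / q e)) (p' / p ε - q' / q ε) ε := by
  have h : HasDerivAt (fun e => p e * t / q e) ((p' * t * q ε - p ε * t * q') / q ε ^ 2) ε :=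
    (hp.mul_const t).div hq hqε.ne'
  convert h.log (by positivity) using 1
  field_simp

namespace Polynomial

theorem degree_le_of_mem_degreeLT_natDegree {R : Type*} [Semiring R] {P u : R[X]}
    (hu : u ∈ degreeLT R P.natDegree) : u.degree ≤ P.degree := by
  rcases eq_or_ne P 0 with rfl | hP
  · simpa [mem_degreeLT] using hu
  · rw [degree_eq_natDegree hP]
    exact (mem_degreeLT.1 hu).le

theorem exists_abs_eval_le_mul_eval {P u : ℝ[X]} (hP : ∀ x, 0 < P.eval x)
    (hu : u.degree ≤ P.degree) : ∃ M, ∀ x, |u.eval x| ≤ M * P.eval x := by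
  have hO : (fun x => u.eval x) =O[cocompact ℝ] fun x => P.eval x := by
    rw [← Metric.cobounded_eq_cocompact]
    exact isBigO_cobounded_of_degree_le hu
  obtain ⟨M, hM⟩ := exists_norm_le_mul_norm_of_isBigO_cocompact u.continuous P.continuous
    (fun x => (hP x).ne') hO
  exact ⟨M, fun x => by simpa [abs_of_pos (hP x)] using hM x⟩

theorem exists_pos_le_eval {P : ℝ[X]} (hP : ∀ x, 0 < P.eval x) : ∃ c > 0, ∀ x, c ≤ P.eval x := by
  have hP0 : P ≠ 0 := fun h => by simpa [h] using hP 0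
  obtain ⟨M, hM⟩ :=
    exists_abs_eval_le_mul_eval (u := 1) hP (by simpa using zero_le_degree_iff.2 hP0)
  simp only [eval_one, abs_one] at hM
  have hM0 : 0 < M := pos_of_mul_pos_left (one_pos.trans_le (hM 0)) (hP 0).le
  exact ⟨M⁻¹, inv_pos.2 hM0, fun x => by rw [inv_le_iff_one_le_mul₀ hM0, mul_comm]; exact hM x⟩

theorem exists_abs_eval_le_mul_one_add_abs_pow (P : ℝ[X]) :
    ∃ C, ∀ x, |P.eval x| ≤ C * (1 + |x|) ^ P.natDegree := by
  have hO : (fun x => P.eval x) =O[cocompact ℝ] fun x => (1 + |x|) ^ P.natDegree := by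
    rw [← Metric.cobounded_eq_cocompact]
    refine (isBigO_cobounded_of_degree_le (Q := X ^ P.natDegree) ?_).trans ?_
    · simp [degree_le_natDegree]
    · refine IsBigO.of_bound 1 (Eventually.of_forall fun x => ?_)
      simp only [eval_pow, eval_X, norm_pow, Real.norm_eq_abs, one_mul]
      rw [abs_of_nonneg (by positivity : (0 : ℝ) ≤ 1 + |x|)]
      gcongr
      linarith
  obtain ⟨C, hC⟩ := exists_norm_le_mul_norm_of_isBigO_cocompact P.continuous (by fun_prop)
    (fun x => pow_ne_zero _ (by positivity)) hO
  exact ⟨C, fun x => by simpa [abs_of_pos (by positivity : 0 < 1 + |x|)] using hC x⟩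

/-- The uniform control on `|ε| < δ` that dominates both `log (P + ε • u)` and its
`ε`-derivative `u / (P + ε • u)`. -/
def TamePerturbation (P u : ℝ[X]) (δ A B : ℝ) : Prop :=
  ∀ ε, |ε| < δ → ∀ x, 0 < (P + ε • u).eval x ∧
    |log ((P + ε • u).eval x)| ≤ A * (1 + log (1 + |x|)) ∧ |u.eval x / (P + ε • u).eval x| ≤ B

theorem TamePerturbation.mono {P u : ℝ[X]} {δ δ' A B : ℝ} (h : TamePerturbation P u δ A B)
    (hδ : δ' ≤ δ) : TamePerturbation P u δ' A B :=
  fun ε hε => h ε (hε.trans_le hδ)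

theorem exists_tamePerturbation {P u : ℝ[X]} (hP : ∀ x, 0 < P.eval x)
    (hu : u.degree ≤ P.degree) : ∃ δ > 0, ∃ A B, TamePerturbation P u δ A B := by
  obtain ⟨M, hM⟩ := exists_abs_eval_le_mul_eval hP hu
  obtain ⟨c, hc, hcP⟩ := exists_pos_le_eval hP
  obtain ⟨C, hC⟩ := exists_abs_eval_le_mul_one_add_abs_pow P
  refine ⟨(2 * (|M| + 1))⁻¹, by positivity, |log (c / 2)| + |log (2 * C)| + P.natDegree, 2 * M,
    fun ε hε x => ?_⟩
  have hPx := hP x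
  have hsmall : |ε * u.eval x| ≤ P.eval x / 2 := by
    calc |ε * u.eval x| = |ε| * |u.eval x| := abs_mul _ _
      _ ≤ (2 * (|M| + 1))⁻¹ * (|M| * P.eval x) := by
          gcongr
          exact (hM x).trans (mul_le_mul_of_nonneg_right (le_abs_self M) hPx.le)
      _ ≤ P.eval x / 2 := by
          rw [inv_mul_le_iff₀ (by positivity)]
          nlinarith [abs_nonneg M]
  have hεx : (P + ε • u).eval x = P.eval x + ε * u.eval x := by
    rw [eval_add, eval_smul, smul_eq_mul]
  obtain ⟨hlo, hhi⟩ := abs_le.1 hsmall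
  have hpos : 0 < (P + ε • u).eval x := by rw [hεx]; linarith
  refine ⟨hpos, abs_log_le_mul_one_add_log (by positivity) (abs_nonneg x) ?_ ?_, ?_⟩
  · linarith [hcP x]
  · linarith [le_abs_self (P.eval x), hC x]
  · rw [abs_div, abs_of_pos hpos, div_le_iff₀ hpos]
    have hM0 : 0 ≤ M := nonneg_of_mul_nonneg_left ((abs_nonneg _).trans (hM x)) hPx
    have hhalf : P.eval x / 2 ≤ (P + ε • u).eval x := by linarith
    nlinarith [hM x, mul_le_mul_of_nonneg_left hhalf hM0]

theorem hasDerivAt_eval_add_smul (P u : ℝ[X]) (x ε : ℝ) :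
    HasDerivAt (fun e : ℝ => (P + e • u).eval x) (u.eval x) ε := by
  simp only [eval_add, eval_smul, smul_eq_mul]
  simpa using ((hasDerivAt_id ε).mul_const (u.eval x)).const_add (P.eval x)

end Polynomial

theorem hasDerivAt_integral_pow_mul_log_div {k m : ℕ} (hk : k ≤ m) {θ : ℝ → ℝ}
    (hθmeas : Measurable θ) (hθpos : ∀ x, 0 < θ x)
    (hθint : Integrable (fun x : ℝ =>
      (1 + |x| ^ m) * θ x * (1 + |log (θ x)| + log (1 + |x|))))
    {P Q u v : ℝ[X]} {δ A A' B B' : ℝ} (hδ : 0 < δ)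
    (hP : TamePerturbation P u δ A B) (hQ : TamePerturbation Q v δ A' B') :
    (∀ ε : ℝ, |ε| < δ → Integrable (fun x : ℝ => x ^ k * θ x *
        log ((P + ε • u).eval x * θ x / (Q + ε • v).eval x))) ∧
      HasDerivAt
        (fun ε : ℝ => ∫ x : ℝ, x ^ k * θ x *
          log ((P + ε • u).eval x * θ x / (Q + ε • v).eval x))
        (∫ x : ℝ, x ^ k * (u.eval x / P.eval x - v.eval x / Q.eval x) * θ x) 0 := by
  set G := fun x : ℝ => (1 + |x| ^ m) * θ x * (1 + |log (θ x)| + log (1 + |x|))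
  have hL : ∀ x : ℝ, 0 ≤ log (1 + |x|) := fun x => log_nonneg (by linarith [abs_nonneg x])
  have hmeas : ∀ ε : ℝ, AEStronglyMeasurable (fun x : ℝ => x ^ k * θ x *
      log ((P + ε • u).eval x * θ x / (Q + ε • v).eval x)) := fun ε =>
    (by fun_prop : Measurable _).aestronglyMeasurable
  have hint : ∀ ε : ℝ, |ε| < δ → Integrable (fun x : ℝ => x ^ k * θ x *
      log ((P + ε • u).eval x * θ x / (Q + ε • v).eval x)) := by
    refine fun ε hε => (hθint.const_mul (A + A' + 1)).mono' (hmeas ε) (ae_of_all _ fun x => ?_)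
    obtain ⟨hPε, hlogP, -⟩ := hP ε hε x
    obtain ⟨hQε, hlogQ, -⟩ := hQ ε hε x
    exact norm_pow_mul_mul_le hk (hθpos x)
      (abs_log_mul_div_le hPε hQε (hθpos x) (hL x) hlogP hlogQ)
  set F' := fun (ε x : ℝ) => x ^ k * θ x *
    (u.eval x / (P + ε • u).eval x - v.eval x / (Q + ε • v).eval x)
  have hF'_le : ∀ x, ∀ ε ∈ Metric.ball (0 : ℝ) δ, ‖F' ε x‖ ≤ (B + B') * G x := by
    intro x ε hε
    rw [mem_ball_zero_iff, Real.norm_eq_abs] at hε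
    obtain ⟨-, -, hPu⟩ := hP ε hε x
    obtain ⟨-, -, hQv⟩ := hQ ε hε x
    have hℓ : 1 ≤ 1 + |log (θ x)| + log (1 + |x|) := by linarith [abs_nonneg (log (θ x)), hL x]
    have hB : 0 ≤ B + B' := by linarith [(abs_nonneg _).trans hPu, (abs_nonneg _).trans hQv]
    refine norm_pow_mul_mul_le hk (hθpos x) ((abs_sub _ _).trans ?_)
    calc _ ≤ B + B' := add_le_add hPu hQv
      _ ≤ (B + B') * (1 + |log (θ x)| + log (1 + |x|)) :=
          le_mul_of_one_le_right hB hℓ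
  have hderiv : ∀ x, ∀ ε ∈ Metric.ball (0 : ℝ) δ, HasDerivAt (fun e : ℝ => x ^ k * θ x *
      log ((P + e • u).eval x * θ x / (Q + e • v).eval x)) (F' ε x) ε := by
    intro x ε hε
    rw [mem_ball_zero_iff, Real.norm_eq_abs] at hε
    exact (hasDerivAt_log_mul_div (hasDerivAt_eval_add_smul P u x ε)
      (hasDerivAt_eval_add_smul Q v x ε) (hP ε hε x).1 (hQ ε hε x).1 (hθpos x)).const_mul _
  have key := hasDerivAt_integral_of_dominated_loc_of_deriv_le (Metric.ball_mem_nhds 0 hδ)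
    (Eventually.of_forall hmeas) (hint 0 (by simpa using hδ))
    ((by fun_prop : Measurable (F' 0)).aestronglyMeasurable) (ae_of_all _ hF'_le)
    (hθint.const_mul (B + B')) (ae_of_all _ hderiv)
  refine ⟨hint, ?_⟩
  have hF'0 : (fun x => x ^ k * (u.eval x / P.eval x - v.eval x / Q.eval x) * θ x) = F' 0 := by
    funext x
    simp only [F', zero_smul, add_zero]
    ring
  exact hF'0 ▸ key.2

theorem logMoment_directional_derivative_general
    (n k : ℕ) (hk : k ≤ 2 * n)
    (P Q : Polynomial ℝ)
    (hPdeg : P.natDegree = 2 * n) (hQdeg : Q.natDegree = 2 * n)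
    (hPpos : ∀ x : ℝ, 0 < P.eval x) (hQpos : ∀ x : ℝ, 0 < Q.eval x)
    (u v : Polynomial ℝ)
    (hu : u ∈ Polynomial.degreeLT ℝ (2 * n)) (hv : v ∈ Polynomial.degreeLT ℝ (2 * n))
    (θ : ℝ → ℝ) (hθmeas : Measurable θ) (hθpos : ∀ x, 0 < θ x)
    (hθint : Integrable (fun x : ℝ =>
      (1 + |x| ^ (2 * n)) * θ x * (1 + |Real.log (θ x)| + Real.log (1 + |x|)))) :
    ∃ δ > (0 : ℝ),
      (∀ ε : ℝ, |ε| < δ →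
        (∀ x : ℝ, 0 < (P + ε • u).eval x) ∧ (∀ x : ℝ, 0 < (Q + ε • v).eval x) ∧
        Integrable (fun x : ℝ => x ^ k * θ x *
          Real.log ((P + ε • u).eval x * θ x / (Q + ε • v).eval x))) ∧
      HasDerivAt
        (fun ε : ℝ => ∫ x : ℝ, x ^ k * θ x *
          Real.log ((P + ε • u).eval x * θ x / (Q + ε • v).eval x))
        (∫ x : ℝ, x ^ k * (u.eval x / P.eval x - v.eval x / Q.eval x) * θ x) 0 := by
  obtain ⟨δP, hδP, AP, BP, hPu⟩ :=
    exists_tamePerturbation hPpos (degree_le_of_mem_degreeLT_natDegree (hPdeg ▸ hu))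
  obtain ⟨δQ, hδQ, AQ, BQ, hQv⟩ :=
    exists_tamePerturbation hQpos (degree_le_of_mem_degreeLT_natDegree (hQdeg ▸ hv))
  have hPu' := hPu.mono (min_le_left δP δQ)
  have hQv' := hQv.mono (min_le_right δP δQ)
  obtain ⟨hint, hderiv⟩ :=
    hasDerivAt_integral_pow_mul_log_div hk hθmeas hθpos hθint (lt_min hδP hδQ) hPu' hQv'
  exact ⟨min δP δQ, lt_min hδP hδQ,
    fun ε hε => ⟨fun x => (hPu' ε hε x).1, fun x => (hQv' ε hε x).1, hint ε hε⟩, hderiv⟩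

/-- Directional derivative of the generalized logarithmic moment functional
`g_k(P,Q) = ∫ x^k θ(x) log(P(x)θ(x)/Q(x)) dx` in the direction `(u,v) ∈ V_{2n−1} × V_{2n−1}`:
it equals `∫ x^k (u/P − v/Q) θ dx`; moreover for small `ε` the perturbed polynomials remain
positive and the integrand remains integrable. -/
theorem logMoment_directional_derivative
    (n k : ℕ) (hn : 1 ≤ n) (hk : k ≤ 2 * n)
    (P Q : Polynomial ℝ)
    (hPdeg : P.natDegree = 2 * n) (hQdeg : Q.natDegree = 2 * n)
    (hPpos : ∀ x : ℝ, 0 < P.eval x) (hQpos : ∀ x : ℝ, 0 < Q.eval x)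
    (u v : Polynomial ℝ)
    (hu : u ∈ Polynomial.degreeLT ℝ (2 * n)) (hv : v ∈ Polynomial.degreeLT ℝ (2 * n))
    (θ : ℝ → ℝ) (hθmeas : Measurable θ) (hθpos : ∀ x, 0 < θ x)
    (hθint : Integrable (fun x : ℝ =>
      (1 + |x| ^ (2 * n)) * θ x * (1 + |Real.log (θ x)| + Real.log (1 + |x|)))) :
    ∃ δ > (0 : ℝ),
      (∀ ε : ℝ, |ε| < δ →
        (∀ x : ℝ, 0 < (P + ε • u).eval x) ∧ (∀ x : ℝ, 0 < (Q + ε • v).eval x) ∧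
        Integrable (fun x : ℝ => x ^ k * θ x *
          Real.log ((P + ε • u).eval x * θ x / (Q + ε • v).eval x))) ∧
      HasDerivAt
        (fun ε : ℝ => ∫ x : ℝ, x ^ k * θ x *
          Real.log ((P + ε • u).eval x * θ x / (Q + ε • v).eval x))
        (∫ x : ℝ, x ^ k * (u.eval x / P.eval x - v.eval x / Q.eval x) * θ x) 0 :=
  logMoment_directional_derivative_general n k hk P Q hPdeg hQdeg hPpos hQpos u v hu hv θ hθmeas
    hθpos hθint
end

section
/- Fix an integer n ≥ 1 and k ∈ {0, 1, …, 2n}. Let P be a real polynomial of degree at most 2n, let Q be a real polynomial of degree exactly 2n that is strictly positive at every point of ℝ, let u, v ∈ V_{2n−1}, and let θ : ℝ → ℝ be Lebesgue-measurable with θ(x) > 0 for all x and ∫ (1+|x|^{2n}) θ(x) dx < ∞. Then there exists δ > 0 such that for all ε with |ε| < δ the polynomial Q + εv is strictly positive on ℝ, and the map ε ↦ ∫_ℝ x^k (P(x)+εu(x))/(Q(x)+εv(x)) θ(x) dx is differentiable at ε = 0 with derivative ∫_ℝ x^k ( u(x)Q(x) − v(x)P(x) ) θ(x)/Q(x)²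 dx. -/
/-!
Differentiate under the integral sign. Since `Q > 0` and `deg v ≤ deg Q`, the ratio `v / Q` is
continuous and bounded at `±∞`, so `|v| ≤ M Q` on all of `ℝ` and `Q + εv ≥ Q / 2` once
`|ε| < 1 / (2M)`. The `ε`-derivative of the integrand is `(uQ - vP) / (Q + εv)² · xᵏθ`; as
`deg (uQ - vP) ≤ deg Q²` it is dominated by `4M' |xᵏθ|`, which is integrable because
`|x|ᵏ ≤ 1 + |x|²ⁿ`.
-/

open MeasureTheory Polynomial Real Filter Asymptotics

theorem abs_div_sq_le_of_half_le {w q d M : ℝ} (hM : 0 ≤ M) (hq : 0 < q)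
    (hw : |w| ≤ M * q ^ 2) (hd : q / 2 ≤ d) : |w / d ^ 2| ≤ 4 * M := by
  have hd₀ : 0 < d := by linarith
  have hsq : q ^ 2 ≤ 4 * d ^ 2 := by nlinarith
  rw [abs_div, abs_of_pos (pow_pos hd₀ 2), div_le_iff₀ (pow_pos hd₀ 2)]
  nlinarith [mul_le_mul_of_nonneg_left hsq hM]

theorem MeasureTheory.Integrable.pow_mul_of_one_add_abs_pow_mul {μ : Measure ℝ} {θ : ℝ → ℝ}
    {k m : ℕ} (hk : k ≤ m)
    (hθ : Integrable (fun x => (1 + |x| ^ m) * θ x) μ) (hmeas : AEStronglyMeasurable θ μ) :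
    Integrable (fun x => x ^ k * θ x) μ := by
  refine hθ.norm.mono' ((continuous_pow k).aestronglyMeasurable.mul hmeas)
    (ae_of_all _ fun x => ?_)
  have hpow : |x| ^ k ≤ 1 + |x| ^ m := by
    rcases le_total |x| 1 with h | h
    · linarith [pow_le_one₀ (n := k) (abs_nonneg x) h, pow_nonneg (abs_nonneg x) m]
    · linarith [pow_le_pow_right₀ h hk]
  rw [norm_mul, norm_mul, norm_pow, Real.norm_eq_abs x,
    Real.norm_of_nonneg (by positivity : (0 : ℝ) ≤ 1 + |x| ^ m)]
  gcongr

namespace Polynomial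

theorem exists_pos_abs_eval_le_mul_eval {A B : ℝ[X]} (hB : ∀ x, 0 < B.eval x)
    (h : A.degree ≤ B.degree) : ∃ M > 0, ∀ x, |A.eval x| ≤ M * B.eval x := by
  have hB₀ : ∀ x, B.eval x ≠ 0 := fun x => (hB x).ne'
  have hratio : (fun x => A.eval x / B.eval x) =O[cocompact ℝ] (1 : ℝ → ℝ) := by
    rw [← Metric.cobounded_eq_cocompact]
    refine ((isBigO_cobounded_of_degree_le h).mul (isBigO_refl (fun x => (B.eval x)⁻¹) _)).congr
      (fun x => (div_eq_mul_inv _ _).symm) (fun x => mul_inv_cancel₀ (hB₀ x))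
  obtain ⟨M, hM, hbound⟩ := ((A.continuous.div B.continuous hB₀).isBounded_range_iff_isBigO.2
    hratio).exists_pos_norm_le
  refine ⟨M, hM, fun x => ?_⟩
  have hx := hbound _ ⟨x, rfl⟩
  rwa [Pi.div_apply, norm_div, Real.norm_eq_abs, Real.norm_eq_abs, abs_of_pos (hB x),
    div_le_iff₀ (hB x)] at hx

theorem eval_add_smul (P u : ℝ[X]) (t x : ℝ) : (P + t • u).eval x = P.eval x + t * u.eval x := by
  rw [eval_add, eval_smul, smul_eq_mul]

theorem exists_half_eval_le_eval_add_smul {Q v : ℝ[X]} (hQ : ∀ x, 0 < Q.eval x)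
    (hv : v.degree ≤ Q.degree) :
    ∃ δ > 0, ∀ ε : ℝ, |ε| < δ → ∀ x, Q.eval x / 2 ≤ (Q + ε • v).eval x := by
  obtain ⟨M, hM, hMv⟩ := exists_pos_abs_eval_le_mul_eval hQ hv
  refine ⟨(2 * M)⁻¹, by positivity, fun ε hε x => ?_⟩
  have hεM : 2 * M * |ε| ≤ 1 := by
    have := mul_le_mul_of_nonneg_left hε.le (by positivity : (0 : ℝ) ≤ 2 * M)
    rwa [mul_inv_cancel₀ (by positivity)] at this
  have hsmall : |ε * v.eval x| ≤ Q.eval x / 2 := by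
    rw [abs_mul]
    nlinarith [hMv x, abs_nonneg ε, abs_nonneg (v.eval x), hQ x]
  rw [eval_add_smul]
  linarith [neg_abs_le (ε * v.eval x)]

theorem hasDerivAt_eval_add_smul_div_eval_add_smul (P Q u v : ℝ[X]) {x ε : ℝ}
    (h : (Q + ε • v).eval x ≠ 0) :
    HasDerivAt (fun t => (P + t • u).eval x / (Q + t • v).eval x)
      ((u * Q - v * P).eval x / (Q + ε • v).eval x ^ 2) ε := by
  have hlin : ∀ R w : ℝ[X], HasDerivAt (fun t => (R + t • w).eval x) (w.eval x) ε := fun R w => by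
    simpa only [eval_add_smul] using (hasDerivAt_mul_const (w.eval x)).const_add (R.eval x)
  refine ((hlin P u).fun_div (hlin Q v) h).congr_deriv ?_
  simp only [eval_add_smul, eval_sub, eval_mul]
  ring

theorem degree_mul_sub_mul_le_degree_sq {P Q u v : ℝ[X]} (hP : P.degree ≤ Q.degree)
    (hu : u.degree ≤ Q.degree) (hv : v.degree ≤ Q.degree) :
    (u * Q - v * P).degree ≤ (Q ^ 2).degree := by
  rw [pow_two, degree_mul]
  refine (degree_sub_le _ _).trans (max_le ?_ ?_)
  · rw [degree_mul]; exact add_le_add_left hu _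
  · rw [degree_mul]; exact add_le_add hv hP

theorem hasDerivAt_integral_eval_add_smul_div {P Q u v : ℝ[X]} {ρ : ℝ → ℝ} {δ : ℝ}
    (hQ : ∀ x, 0 < Q.eval x) (hP : P.degree ≤ Q.degree) (hu : u.degree ≤ Q.degree)
    (hv : v.degree ≤ Q.degree) (hδ : 0 < δ)
    (hlow : ∀ ε : ℝ, |ε| < δ → ∀ x, Q.eval x / 2 ≤ (Q + ε • v).eval x) (hρ : Integrable ρ) :
    HasDerivAt (fun ε : ℝ => ∫ x, (P + ε • u).eval x / (Q + ε • v).eval x * ρ x)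
      (∫ x, (u * Q - v * P).eval x / Q.eval x ^ 2 * ρ x) 0 := by
  have hlow' : ∀ ε ∈ Metric.ball (0 : ℝ) δ, ∀ x, Q.eval x / 2 ≤ (Q + ε • v).eval x :=
    fun ε hε => hlow ε (by simpa using hε)
  have hpos : ∀ ε ∈ Metric.ball (0 : ℝ) δ, ∀ x, 0 < (Q + ε • v).eval x :=
    fun ε hε x => (half_pos (hQ x)).trans_le (hlow' ε hε x)
  obtain ⟨Mp, -, hMp⟩ := exists_pos_abs_eval_le_mul_eval hQ hP
  obtain ⟨Mw, hMw₀, hMw⟩ := exists_pos_abs_eval_le_mul_eval (B := Q ^ 2)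
    (fun x => by simpa using pow_pos (hQ x) 2) (degree_mul_sub_mul_le_degree_sq hP hu hv)
  have hmeas : ∀ ε : ℝ,
      AEStronglyMeasurable (fun x => (P + ε • u).eval x / (Q + ε • v).eval x) :=
    fun ε => ((P + ε • u).continuous.measurable.div
      (Q + ε • v).continuous.measurable).aestronglyMeasurable
  have hmeas' : AEStronglyMeasurable
      (fun x => (u * Q - v * P).eval x / (Q + (0 : ℝ) • v).eval x ^ 2) :=
    ((u * Q - v * P).continuous.measurable.div
      ((Q + (0 : ℝ) • v).continuous.measurable.pow_const 2)).aestronglyMeasurable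
  have hint : Integrable (fun x => (P + (0 : ℝ) • u).eval x / (Q + (0 : ℝ) • v).eval x * ρ x) :=
    hρ.bdd_mul (hmeas 0) (ae_of_all _ fun x => by
      simpa [abs_div, abs_of_pos (hQ x), div_le_iff₀ (hQ x)] using hMp x)
  have hbound : ∀ᵐ x, ∀ ε ∈ Metric.ball (0 : ℝ) δ,
      ‖(u * Q - v * P).eval x / (Q + ε • v).eval x ^ 2 * ρ x‖ ≤ 4 * Mw * ‖ρ x‖ := by
    refine ae_of_all _ fun x ε hε => ?_
    rw [norm_mul, Real.norm_eq_abs]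
    gcongr
    exact abs_div_sq_le_of_half_le hMw₀.le (hQ x) (by simpa using hMw x) (hlow' ε hε x)
  have hdiff : ∀ᵐ x, ∀ ε ∈ Metric.ball (0 : ℝ) δ,
      HasDerivAt (fun t => (P + t • u).eval x / (Q + t • v).eval x * ρ x)
        ((u * Q - v * P).eval x / (Q + ε • v).eval x ^ 2 * ρ x) ε :=
    ae_of_all _ fun x ε hε =>
      (hasDerivAt_eval_add_smul_div_eval_add_smul P Q u v (hpos ε hε x).ne').mul_const (ρ x)
  simpa using (hasDerivAt_integral_of_dominated_loc_of_deriv_le (Metric.ball_mem_nhds 0 hδ)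
    (.of_forall fun ε => (hmeas ε).mul hρ.1) hint (hmeas'.mul hρ.1) hbound
    (hρ.norm.const_mul _) hdiff).2

end Polynomial

theorem powerMoment_directional_derivative_general
    (n k : ℕ) (hk : k ≤ 2 * n)
    (P Q : Polynomial ℝ)
    (hPdeg : P.natDegree ≤ 2 * n) (hQdeg : Q.natDegree = 2 * n)
    (hQpos : ∀ x : ℝ, 0 < Q.eval x)
    (u v : Polynomial ℝ)
    (hu : u ∈ Polynomial.degreeLT ℝ (2 * n)) (hv : v ∈ Polynomial.degreeLT ℝ (2 * n))
    (θ : ℝ → ℝ) (hθmeas : Measurable θ)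
    (hθint : Integrable (fun x : ℝ => (1 + |x| ^ (2 * n)) * θ x)) :
    ∃ δ > (0 : ℝ),
      (∀ ε : ℝ, |ε| < δ → ∀ x : ℝ, 0 < (Q + ε • v).eval x) ∧
      HasDerivAt
        (fun ε : ℝ => ∫ x : ℝ, x ^ k * ((P + ε • u).eval x / (Q + ε • v).eval x) * θ x)
        (∫ x : ℝ, x ^ k * (u.eval x * Q.eval x - v.eval x * P.eval x) * θ x
          / (Q.eval x) ^ 2) 0 := by
  have hQdeg' : Q.degree = (2 * n : ℕ) := by
    rw [degree_eq_natDegree fun h => by simpa [h] using hQpos 0, hQdeg]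
  have hPQ : P.degree ≤ Q.degree := hQdeg' ▸ degree_le_of_natDegree_le hPdeg
  have huQ : u.degree ≤ Q.degree := hQdeg' ▸ (mem_degreeLT.1 hu).le
  have hvQ : v.degree ≤ Q.degree := hQdeg' ▸ (mem_degreeLT.1 hv).le
  obtain ⟨δ, hδ, hlow⟩ := exists_half_eval_le_eval_add_smul hQpos hvQ
  refine ⟨δ, hδ, fun ε hε x => (half_pos (hQpos x)).trans_le (hlow ε hε x), ?_⟩
  convert hasDerivAt_integral_eval_add_smul_div hQpos hPQ huQ hvQ hδ hlow
    (hθint.pow_mul_of_one_add_abs_pow_mul hk hθmeas.aestronglyMeasurable) using 1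
  · ext ε
    congr 1 with x
    ring
  · congr 1 with x
    rw [eval_sub, eval_mul, eval_mul]
    ring

/-- Directional derivative of the power moment functional
`h_k(P,Q) = ∫ x^k P(x)θ(x)/Q(x) dx` in the direction `(u,v) ∈ V_{2n−1} × V_{2n−1}`:
it equals `∫ x^k (uQ − vP) θ / Q² dx`; moreover for small `ε` the perturbed denominator
remains positive. -/
theorem powerMoment_directional_derivative
    (n k : ℕ) (hn : 1 ≤ n) (hk : k ≤ 2 * n)
    (P Q : Polynomial ℝ)
    (hPdeg : P.natDegree ≤ 2 * n) (hQdeg : Q.natDegree = 2 * n)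
    (hQpos : ∀ x : ℝ, 0 < Q.eval x)
    (u v : Polynomial ℝ)
    (hu : u ∈ Polynomial.degreeLT ℝ (2 * n)) (hv : v ∈ Polynomial.degreeLT ℝ (2 * n))
    (θ : ℝ → ℝ) (hθmeas : Measurable θ) (hθpos : ∀ x, 0 < θ x)
    (hθint : Integrable (fun x : ℝ => (1 + |x| ^ (2 * n)) * θ x)) :
    ∃ δ > (0 : ℝ),
      (∀ ε : ℝ, |ε| < δ → ∀ x : ℝ, 0 < (Q + ε • v).eval x) ∧
      HasDerivAt
        (fun ε : ℝ => ∫ x : ℝ, x ^ k * ((P + ε • u).eval x / (Q + ε • v).eval x) * θ x)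
        (∫ x : ℝ, x ^ k * (u.eval x * Q.eval x - v.eval x * P.eval x) * θ x
          / (Q.eval x) ^ 2) 0 :=
  powerMoment_directional_derivative_general n k hk P Q hPdeg hQdeg hQpos u v hu hv θ hθmeas hθint
end

section
/- Fix an integer n ≥ 1 and let P and Q be nonzero real polynomials, each of degree exactly 2n. Then the set {(u, v) ∈ V_{2n−1} × V_{2n−1} : uQ = vP} is an ℝ-linear subspace of V_{2n−1} × V_{2n−1} whose dimension equals the degree of the greatest common divisor of P and Q. -/
open Polynomial

/-- The set `{(u,v) ∈ V_{2n−1} × V_{2n−1} : uQ = vP}` is a linear subspace whose dimension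
equals the degree of the greatest common divisor of `P` and `Q`, for nonzero real
polynomials `P`, `Q` of degree exactly `2n`. -/
theorem dimension_of_uQ_eq_vP_subspace
    (n : ℕ) (hn : 1 ≤ n)
    (P Q : Polynomial ℝ) (hP : P ≠ 0) (hQ : Q ≠ 0)
    (hPdeg : P.natDegree = 2 * n) (hQdeg : Q.natDegree = 2 * n) :
    ∃ S : Submodule ℝ ((Polynomial.degreeLT ℝ (2 * n)) × (Polynomial.degreeLT ℝ (2 * n))),
      (∀ p : (Polynomial.degreeLT ℝ (2 * n)) × (Polynomial.degreeLT ℝ (2 * n)),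
        p ∈ S ↔ (p.1 : Polynomial ℝ) * Q = (p.2 : Polynomial ℝ) * P) ∧
      Module.finrank ℝ S = (EuclideanDomain.gcd P Q).natDegree := by
  classical
  set g := EuclideanDomain.gcd P Q with hg
  set d := g.natDegree with hd
  have hg0 : g ≠ 0 := fun h => hP (EuclideanDomain.gcd_eq_zero_iff.mp h).1
  obtain ⟨p₁, hp₁⟩ := EuclideanDomain.gcd_dvd_left P Q
  obtain ⟨q₁, hq₁⟩ := EuclideanDomain.gcd_dvd_right P Q
  rw [← hg] at hp₁ hq₁
  have hp₁0 : p₁ ≠ 0 := by rintro rfl; rw [mul_zero] at hp₁; exact hP hp₁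
  have hq₁0 : q₁ ≠ 0 := by rintro rfl; rw [mul_zero] at hq₁; exact hQ hq₁
  -- coprimality via Bézout
  have hcop : IsCoprime p₁ q₁ := by
    refine ⟨EuclideanDomain.gcdA P Q, EuclideanDomain.gcdB P Q, ?_⟩
    have hb := EuclideanDomain.gcd_eq_gcd_ab P Q
    rw [← hg] at hb
    have : g * (EuclideanDomain.gcdA P Q * p₁ + EuclideanDomain.gcdB P Q * q₁) = g * 1 := by
      linear_combination -hb - EuclideanDomain.gcdA P Q * hp₁ - EuclideanDomain.gcdB P Q * hq₁
    exact mul_left_cancel₀ hg0 this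
  -- degrees
  have hdsum : d + p₁.natDegree = 2 * n := by
    rw [hd, ← Polynomial.natDegree_mul hg0 hp₁0, ← hp₁, hPdeg]
  have hdsum' : d + q₁.natDegree = 2 * n := by
    rw [hd, ← Polynomial.natDegree_mul hg0 hq₁0, ← hq₁, hQdeg]
  have hmul : ∀ r : Polynomial ℝ, r ≠ 0 → d + r.natDegree = 2 * n →
      ∀ w ∈ Polynomial.degreeLT ℝ d, r * w ∈ Polynomial.degreeLT ℝ (2 * n) := by
    intro r hr hrd w hw
    rw [Polynomial.mem_degreeLT] at hw ⊢
    by_cases hw0 : w = 0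
    · rw [hw0, mul_zero, Polynomial.degree_zero]; exact WithBot.bot_lt_coe _
    · have h1 : w.natDegree < d := (Polynomial.natDegree_lt_iff_degree_lt hw0).mpr hw
      rw [Polynomial.degree_eq_natDegree (mul_ne_zero hr hw0), Nat.cast_lt,
        Polynomial.natDegree_mul hr hw0]
      omega
  -- the subspace as a kernel
  let φ : ((Polynomial.degreeLT ℝ (2 * n)) × (Polynomial.degreeLT ℝ (2 * n))) →ₗ[ℝ]
      Polynomial ℝ :=
    { toFun := fun p => (p.1 : Polynomial ℝ) * Q - (p.2 : Polynomial ℝ) * P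
      map_add' := fun p q => by
        simp only [Prod.fst_add, Prod.snd_add, Submodule.coe_add]; ring
      map_smul' := fun c p => by
        simp only [Prod.smul_fst, Prod.smul_snd, SetLike.val_smul, RingHom.id_apply,
          smul_sub, smul_mul_assoc] }
  refine ⟨LinearMap.ker φ, fun p => by
    simp only [LinearMap.mem_ker, φ, LinearMap.coe_mk, AddHom.coe_mk, sub_eq_zero], ?_⟩
  -- the parametrizing map
  let ψ : (Polynomial.degreeLT ℝ d) →ₗ[ℝ]
      ((Polynomial.degreeLT ℝ (2 * n)) × (Polynomial.degreeLT ℝ (2 * n))) :=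
    { toFun := fun w => (⟨p₁ * (w : Polynomial ℝ), hmul p₁ hp₁0 hdsum _ w.2⟩,
        ⟨q₁ * (w : Polynomial ℝ), hmul q₁ hq₁0 hdsum' _ w.2⟩)
      map_add' := fun w₁ w₂ => by
        refine Prod.ext (Subtype.ext ?_) (Subtype.ext ?_) <;>
          simp [mul_add]
      map_smul' := fun c w => by
        refine Prod.ext (Subtype.ext ?_) (Subtype.ext ?_) <;>
          simp [mul_smul_comm] }
  have hinj : Function.Injective ψ := by
    rw [← LinearMap.ker_eq_bot, LinearMap.ker_eq_bot']
    intro w hw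
    have h1 : p₁ * (w : Polynomial ℝ) = 0 := by
      have h2 := congrArg (fun z : (Polynomial.degreeLT ℝ (2 * n)) ×
        (Polynomial.degreeLT ℝ (2 * n)) => (z.1 : Polynomial ℝ)) hw
      simpa [ψ] using h2
    have : (w : Polynomial ℝ) = 0 := by
      rcases mul_eq_zero.mp h1 with h | h
      · exact absurd h hp₁0
      · exact h
    exact Subtype.ext this
  have hrange : LinearMap.range ψ = LinearMap.ker φ := by
    ext p
    constructor
    · rintro ⟨w, rfl⟩
      simp only [LinearMap.mem_ker, φ, ψ, LinearMap.coe_mk, AddHom.coe_mk]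
      rw [hp₁, hq₁]; ring
    · intro hp
      rw [LinearMap.mem_ker] at hp
      simp only [φ, LinearMap.coe_mk, AddHom.coe_mk, sub_eq_zero] at hp
      set u : Polynomial ℝ := (p.1 : Polynomial ℝ) with hu
      set v : Polynomial ℝ := (p.2 : Polynomial ℝ) with hv
      have h1 : u * q₁ = v * p₁ := by
        refine mul_left_cancel₀ hg0 ?_
        rw [hp₁, hq₁] at hp
        linear_combination hp
      have hdvd : p₁ ∣ u := by
        refine hcop.dvd_of_dvd_mul_right ⟨v, ?_⟩
        rw [h1]; ring
      obtain ⟨w, hw⟩ := hdvd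
      have hvw : v = q₁ * w := by
        refine mul_left_cancel₀ hp₁0 ?_
        rw [hw] at h1
        linear_combination -h1
      have hwmem : w ∈ Polynomial.degreeLT ℝ d := by
        rw [Polynomial.mem_degreeLT]
        by_cases hw0 : w = 0
        · rw [hw0, Polynomial.degree_zero]; exact WithBot.bot_lt_coe _
        · have hu0 : u ≠ 0 := by rw [hw]; exact mul_ne_zero hp₁0 hw0
          have humem := p.1.2
          rw [Polynomial.mem_degreeLT, ← hu] at humem
          have h2 : u.natDegree < 2 * n := (Polynomial.natDegree_lt_iff_degree_lt hu0).mpr humem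
          rw [hw, Polynomial.natDegree_mul hp₁0 hw0] at h2
          rw [← Polynomial.natDegree_lt_iff_degree_lt hw0]
          omega
      refine ⟨⟨w, hwmem⟩, ?_⟩
      refine Prod.ext (Subtype.ext ?_) (Subtype.ext ?_)
      · simpa [ψ] using hw.symm
      · simpa [ψ] using hvw.symm
  have e : (Polynomial.degreeLT ℝ d) ≃ₗ[ℝ] (LinearMap.ker φ) :=
    (LinearEquiv.ofInjective ψ hinj).trans (LinearEquiv.ofEq _ _ hrange)
  rw [← e.finrank_eq, (Polynomial.degreeLTEquiv ℝ d).finrank_eq]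
  simp
end

section
/- Fix an integer n ≥ 1. Let P and Q be real polynomials of degree exactly 2n that are strictly positive at every point of ℝ, and let θ : ℝ → ℝ be Lebesgue-measurable with θ(x) > 0 for all x and ∫ (1+|x|^{2n}) θ(x) dx < ∞. Let D be the set of pairs (u, v) ∈ V_{2n−1} × V_{2n−1} such that ∫_ℝ x^k ( u(x)/P(x) − v(x)/Q(x) ) θ(x) dx = 0 for every k = 0, 1, …, 2n and ∫_ℝ x^k ( u(x)Q(x) − v(x)P(x) ) θ(x)/Q(x)² dx = 0 for every k = 0, 1, …, 2n. Then D is an ℝ-linear subspace of V_{2n−1} × V_{2n−1} whose dimension equals the degree of the greatest common divisor of the polynomials P and Q. -/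
/-!
Write `w = u Q - v P`. The two families of conditions say that `w θ / (P Q)` and `w θ / Q²` are
orthogonal to every polynomial of degree at most `2n`, in particular to `u` and to `v`. Since
`u · w / (P Q) - v · w / Q² = w² / (P Q²)`, this forces `∫ w² θ / (P Q²) = 0`, hence `w = 0`.
So `D` consists of the pairs with `u Q = v P`; writing `P = g p`, `Q = g q` with `g = gcd P Q`,
these are exactly the pairs `(t p, t q)` with `deg t < deg g`.
-/

open MeasureTheory Polynomial Real

open Filter Asymptotics

theorem EuclideanDomain.isCoprime_of_eq_gcd_mul {R : Type*} [EuclideanDomain R] [DecidableEq R]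
    {a b a' b' : R} (hg : gcd a b ≠ 0) (ha : a = gcd a b * a') (hb : b = gcd a b * b') :
    IsCoprime a' b' := by
  refine ⟨gcdA a b, gcdB a b, mul_left_cancel₀ hg ?_⟩
  calc gcd a b * (gcdA a b * a' + gcdB a b * b') = a * gcdA a b + b * gcdB a b := by
        linear_combination -(gcdA a b) * ha - gcdB a b * hb
    _ = gcd a b * 1 := by rw [← gcd_eq_gcd_ab, mul_one]

theorem IsCoprime.exists_eq_mul_of_mul_eq_mul {R : Type*} [CommRing R] [IsDomain R]
    {a b u v : R} (hab : IsCoprime a b) (ha : a ≠ 0) (h : u * b = v * a) :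
    ∃ t, u = t * a ∧ v = t * b := by
  obtain ⟨t, rfl⟩ := hab.dvd_of_dvd_mul_right ⟨v, by rw [h, mul_comm]⟩
  refine ⟨t, mul_comm a t, mul_left_cancel₀ ha ?_⟩
  linear_combination -h

namespace Polynomial

theorem mul_mem_degreeLT_iff {R : Type*} [Semiring R] [NoZeroDivisors R] {a t : R[X]}
    (ha : a ≠ 0) {d : ℕ} : t * a ∈ degreeLT R (d + a.natDegree) ↔ t ∈ degreeLT R d := by
  simp only [mem_degreeLT, degree_mul, degree_eq_natDegree ha, Nat.cast_add]
  exact WithBot.add_lt_add_iff_right WithBot.coe_ne_bot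

section CrossMul

variable {K : Type*} [Field K]

noncomputable def crossMul (m : ℕ) (P Q : K[X]) : degreeLT K m × degreeLT K m →ₗ[K] K[X] :=
  LinearMap.mulRight K Q ∘ₗ (degreeLT K m).subtype ∘ₗ LinearMap.fst K _ _ -
    LinearMap.mulRight K P ∘ₗ (degreeLT K m).subtype ∘ₗ LinearMap.snd K _ _

@[simp]
theorem crossMul_apply (m : ℕ) (P Q : K[X]) (p : degreeLT K m × degreeLT K m) :
    crossMul m P Q p = (p.1 : K[X]) * Q - p.2 * P := rfl

theorem finrank_ker_crossMul [DecidableEq K[X]] {m : ℕ} {P Q : K[X]} (hP : P ≠ 0) (hQ : Q ≠ 0)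
    (hPm : P.natDegree = m) (hQm : Q.natDegree = m) :
    Module.finrank K (LinearMap.ker (crossMul m P Q)) = (EuclideanDomain.gcd P Q).natDegree := by
  obtain ⟨p, hPg⟩ := EuclideanDomain.gcd_dvd_left P Q
  obtain ⟨q, hQg⟩ := EuclideanDomain.gcd_dvd_right P Q
  set g := EuclideanDomain.gcd P Q
  have hg : g ≠ 0 := left_ne_zero_of_mul (hPg ▸ hP)
  have hp : p ≠ 0 := right_ne_zero_of_mul (hPg ▸ hP)
  have hq : q ≠ 0 := right_ne_zero_of_mul (hQg ▸ hQ)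
  have hpm : g.natDegree + p.natDegree = m := by rw [← hPm, hPg, natDegree_mul hg hp]
  have hqm : g.natDegree + q.natDegree = m := by rw [← hQm, hQg, natDegree_mul hg hq]
  let Ψ : degreeLT K g.natDegree →ₗ[K] degreeLT K m × degreeLT K m :=
    ((LinearMap.mulRight K p).restrict fun t ht => hpm ▸ (mul_mem_degreeLT_iff hp).2 ht).prod
      ((LinearMap.mulRight K q).restrict fun t ht => hqm ▸ (mul_mem_degreeLT_iff hq).2 ht)
  have hinj : Function.Injective Ψ := fun s t hst =>
    Subtype.ext (mul_right_cancel₀ hp (congrArg (fun z => (z.1 : K[X])) hst))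
  have hrange : LinearMap.range Ψ = LinearMap.ker (crossMul m P Q) := by
    ext ⟨⟨u, hu⟩, ⟨v, hv⟩⟩
    simp only [LinearMap.mem_range, LinearMap.mem_ker, crossMul_apply, sub_eq_zero]
    constructor
    · rintro ⟨t, ht⟩
      have hu' : (t : K[X]) * p = u := congrArg (fun z => (z.1 : K[X])) ht
      have hv' : (t : K[X]) * q = v := congrArg (fun z => (z.2 : K[X])) ht
      rw [← hu', ← hv', hPg, hQg]
      ring
    · intro h
      have h' : u * q = v * p := mul_left_cancel₀ hg (by linear_combination h - u * hQg + v * hPg)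
      obtain ⟨t, rfl, rfl⟩ :=
        (EuclideanDomain.isCoprime_of_eq_gcd_mul hg hPg hQg).exists_eq_mul_of_mul_eq_mul hp h'
      rw [← hpm, mul_mem_degreeLT_iff hp] at hu
      exact ⟨⟨t, hu⟩, rfl⟩
  rw [← hrange, LinearMap.finrank_range_of_inj hinj,
    Module.finrank_eq_card_basis (degreeLT.basis K _), Fintype.card_fin]

end CrossMul

theorem isBounded_range_eval_div_eval {N M : ℝ[X]} (hM : ∀ x, M.eval x ≠ 0)
    (h : N.degree ≤ M.degree) : Bornology.IsBounded (Set.range fun x => N.eval x / M.eval x) :=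
  (N.continuous.div M.continuous hM).isBounded_range_iff_isBigO_atTop_atBot.2
    ⟨(isBigO_one_iff ℝ).2 (div_isBoundedUnder_of_isBigO (isBigO_atTop_of_degree_le N M h)),
     (isBigO_one_iff ℝ).2 (div_isBoundedUnder_of_isBigO (isBigO_atBot_of_degree_le N M h))⟩

theorem integrable_eval_div_eval_mul {m : ℕ} {θ : ℝ → ℝ}
    (hθ : Integrable fun x => (1 + |x| ^ (2 * m)) * θ x) {N D : ℝ[X]} (hD : ∀ x, D.eval x ≠ 0)
    (h : N.natDegree ≤ D.natDegree + 2 * m) :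
    Integrable fun x => N.eval x / D.eval x * θ x := by
  set E : ℝ[X] := X ^ (2 * m) + C 1
  have hE : ∀ x, E.eval x = 1 + |x| ^ (2 * m) := fun x => by
    simp [E, (even_two_mul m).pow_abs, add_comm]
  have hDE : ∀ x, (D * E).eval x ≠ 0 := fun x => by
    rw [eval_mul, hE]; exact mul_ne_zero (hD x) (by positivity)
  have hdeg : N.degree ≤ (D * E).degree := by
    have hDE0 : D * E ≠ 0 := fun h0 => hDE 0 (by rw [h0, eval_zero])
    rw [degree_eq_natDegree hDE0,
      natDegree_mul (left_ne_zero_of_mul hDE0) (right_ne_zero_of_mul hDE0), natDegree_X_pow_add_C]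
    exact degree_le_of_natDegree_le h
  obtain ⟨c, hc⟩ := (isBounded_range_eval_div_eval hDE hdeg).exists_norm_le
  refine (hθ.bdd_mul (N.continuous.div (D * E).continuous hDE).aestronglyMeasurable
    (Eventually.of_forall fun x => hc _ ⟨x, rfl⟩)).congr (Eventually.of_forall fun x => ?_)
  have hEx : E.eval x ≠ 0 := right_ne_zero_of_mul (by simpa only [eval_mul] using hDE x)
  simp only [Pi.div_apply, eval_mul, ← hE]
  field_simp [hD x]

theorem integral_eval_mul_eq_zero_of_moments {μ : Measure ℝ} {F : ℝ → ℝ} {m : ℕ}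
    (hint : ∀ k ≤ m, Integrable (fun x => x ^ k * F x) μ)
    (hmom : ∀ k ≤ m, ∫ x, x ^ k * F x ∂μ = 0) {r : ℝ[X]} (hr : r.natDegree ≤ m) :
    ∫ x, r.eval x * F x ∂μ = 0 := by
  have hsum : ∀ x, r.eval x * F x = ∑ k ∈ Finset.range (m + 1), r.coeff k * (x ^ k * F x) :=
    fun x => by
      rw [eval_eq_sum_range' (Nat.lt_succ_of_le hr), Finset.sum_mul]
      exact Finset.sum_congr rfl fun k _ => by ring
  simp_rw [hsum]
  rw [integral_finsetSum _ fun k hk =>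
    (hint k (Nat.lt_succ_iff.1 (Finset.mem_range.1 hk))).const_mul _]
  exact Finset.sum_eq_zero fun k hk => by
    rw [integral_const_mul, hmom k (Nat.lt_succ_iff.1 (Finset.mem_range.1 hk)), mul_zero]

theorem eq_zero_of_ae_eval_eq_zero {μ : Measure ℝ} [NullSingletonClass μ] [NeZero μ]
    {w : ℝ[X]} (h : ∀ᵐ x ∂μ, w.eval x = 0) : w = 0 := by
  by_contra hw
  have hroots : ∀ᵐ x ∂μ, w.eval x ≠ 0 :=
    ae_iff.2 (by simpa using (finite_setOfPred_isRoot hw).measure_zero μ)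
  obtain ⟨x, hx0, hx⟩ := (h.and hroots).exists
  exact hx hx0

theorem eq_zero_of_integral_sq_mul_eq_zero {g : ℝ → ℝ} (hg : ∀ x, 0 < g x) {w : ℝ[X]}
    (hint : Integrable fun x => w.eval x ^ 2 * g x) (h : ∫ x, w.eval x ^ 2 * g x = 0) :
    w = 0 := by
  have hae := (integral_eq_zero_iff_of_nonneg (fun x => by have := hg x; positivity) hint).1 h
  refine eq_zero_of_ae_eval_eq_zero (μ := volume) ?_
  filter_upwards [hae] with x hx
  exact pow_eq_zero_iff two_ne_zero |>.1 ((mul_eq_zero_iff_right (hg x).ne').1 hx)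

section Moments

variable {m : ℕ} {θ : ℝ → ℝ} {w D r : ℝ[X]}

theorem integrable_eval_mul_eval_div_eval_mul
    (hθ : Integrable fun x => (1 + |x| ^ (2 * m)) * θ x) (hD : ∀ x, D.eval x ≠ 0)
    (hwD : w.natDegree ≤ D.natDegree) (hr : r.natDegree ≤ 2 * m) :
    Integrable fun x => r.eval x * (w.eval x / D.eval x * θ x) := by
  simpa only [eval_mul, mul_div_assoc, mul_assoc] using
    integrable_eval_div_eval_mul hθ (N := r * w) hD (natDegree_mul_le.trans (by omega))

theorem integral_eval_mul_eval_div_eval_mul_eq_zero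
    (hθ : Integrable fun x => (1 + |x| ^ (2 * m)) * θ x) (hD : ∀ x, D.eval x ≠ 0)
    (hwD : w.natDegree ≤ D.natDegree)
    (hmom : ∀ k ≤ 2 * m, ∫ x, x ^ k * (w.eval x / D.eval x * θ x) = 0)
    (hr : r.natDegree ≤ 2 * m) :
    ∫ x, r.eval x * (w.eval x / D.eval x * θ x) = 0 :=
  integral_eval_mul_eq_zero_of_moments (fun k hk => by
    simpa using integrable_eval_mul_eval_div_eval_mul hθ hD hwD (r := X ^ k)
      (by rw [natDegree_X_pow]; exact hk)) hmom hr

end Moments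

end Polynomial

theorem mul_eq_mul_of_moments_eq_zero {n : ℕ} {θ : ℝ → ℝ}
    (hθ : Integrable fun x => (1 + |x| ^ (2 * n)) * θ x) (hθpos : ∀ x, 0 < θ x) {P Q u v : ℝ[X]}
    (hP : ∀ x, 0 < P.eval x) (hQ : ∀ x, 0 < Q.eval x)
    (hPdeg : P.natDegree = 2 * n) (hQdeg : Q.natDegree = 2 * n)
    (hu : u.natDegree ≤ 2 * n) (hv : v.natDegree ≤ 2 * n)
    (h₁ : ∀ k ≤ 2 * n, ∫ x, x ^ k * (u.eval x / P.eval x - v.eval x / Q.eval x) * θ x = 0)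
    (h₂ : ∀ k ≤ 2 * n, ∫ x, x ^ k * (u.eval x * Q.eval x - v.eval x * P.eval x) * θ x
        / Q.eval x ^ 2 = 0) :
    u * Q = v * P := by
  have hP0 : P ≠ 0 := fun h => by simpa [h] using hP 0
  have hQ0 : Q ≠ 0 := fun h => by simpa [h] using hQ 0
  set w := u * Q - v * P
  have hweval : ∀ x, w.eval x = u.eval x * Q.eval x - v.eval x * P.eval x := fun x => by
    simp [w]
  have hwdeg : w.natDegree ≤ 4 * n := (natDegree_sub_le _ _).trans <|
    max_le (natDegree_mul_le.trans (by omega)) (natDegree_mul_le.trans (by omega))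
  have hPQ : ∀ x, (P * Q).eval x ≠ 0 := fun x => by
    rw [eval_mul]; exact (mul_pos (hP x) (hQ x)).ne'
  have hQQ : ∀ x, (Q ^ 2).eval x ≠ 0 := fun x => by
    rw [eval_pow]; exact (pow_pos (hQ x) 2).ne'
  have hwPQ : w.natDegree ≤ (P * Q).natDegree := by rw [natDegree_mul hP0 hQ0]; omega
  have hwQQ : w.natDegree ≤ (Q ^ 2).natDegree := by rw [natDegree_pow]; omega
  have hu₁ : ∫ x, u.eval x * (w.eval x / (P * Q).eval x * θ x) = 0 := by
    refine integral_eval_mul_eval_div_eval_mul_eq_zero hθ hPQ hwPQ (fun k hk => ?_) hu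
    convert h₁ k hk using 3 with x
    have := (hP x).ne'; have := (hQ x).ne'
    simp only [hweval, eval_mul]; field_simp
  have hv₂ : ∫ x, v.eval x * (w.eval x / (Q ^ 2).eval x * θ x) = 0 := by
    refine integral_eval_mul_eval_div_eval_mul_eq_zero hθ hQQ hwQQ (fun k hk => ?_) hv
    convert h₂ k hk using 3 with x
    simp only [hweval, eval_pow]; ring
  have hsq : ∀ x, w.eval x ^ 2 * (θ x / (P.eval x * Q.eval x ^ 2)) =
      u.eval x * (w.eval x / (P * Q).eval x * θ x) -
        v.eval x * (w.eval x / (Q ^ 2).eval x * θ x) := fun x => by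
    have := (hP x).ne'; have := (hQ x).ne'
    simp only [eval_mul, eval_pow, hweval]; field_simp
  have hint₁ := integrable_eval_mul_eval_div_eval_mul hθ hPQ hwPQ hu
  have hint₂ := integrable_eval_mul_eval_div_eval_mul hθ hQQ hwQQ hv
  have hw : w = 0 := by
    refine eq_zero_of_integral_sq_mul_eq_zero
      (fun x => div_pos (hθpos x) (mul_pos (hP x) (pow_pos (hQ x) 2))) ?_ ?_ <;> simp_rw [hsq]
    · exact hint₁.sub hint₂
    · rw [integral_sub hint₁ hint₂, hu₁, hv₂, sub_zero]
  exact sub_eq_zero.1 hw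

theorem moments_eq_zero_iff_mul_eq_mul {n : ℕ} {θ : ℝ → ℝ}
    (hθ : Integrable fun x => (1 + |x| ^ (2 * n)) * θ x) (hθpos : ∀ x, 0 < θ x) {P Q u v : ℝ[X]}
    (hP : ∀ x, 0 < P.eval x) (hQ : ∀ x, 0 < Q.eval x)
    (hPdeg : P.natDegree = 2 * n) (hQdeg : Q.natDegree = 2 * n)
    (hu : u.natDegree ≤ 2 * n) (hv : v.natDegree ≤ 2 * n) :
    ((∀ k ≤ 2 * n, ∫ x, x ^ k * (u.eval x / P.eval x - v.eval x / Q.eval x) * θ x = 0) ∧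
      ∀ k ≤ 2 * n, ∫ x, x ^ k * (u.eval x * Q.eval x - v.eval x * P.eval x) * θ x
        / Q.eval x ^ 2 = 0) ↔ u * Q = v * P := by
  refine ⟨fun ⟨h₁, h₂⟩ => mul_eq_mul_of_moments_eq_zero hθ hθpos hP hQ hPdeg hQdeg hu hv h₁ h₂,
    fun h => ?_⟩
  have hw : ∀ x, u.eval x * Q.eval x - v.eval x * P.eval x = 0 := fun x => by
    rw [← eval_mul, ← eval_mul, ← eval_sub, h, sub_self, eval_zero]
  have hw' : ∀ x, u.eval x / P.eval x - v.eval x / Q.eval x = 0 := fun x => by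
    rw [sub_eq_zero, div_eq_div_iff (hP x).ne' (hQ x).ne']
    linear_combination hw x
  constructor <;> intro k _ <;>
    simp only [hw, hw', mul_zero, zero_mul, zero_div, integral_zero]

theorem dimension_of_jacobian_kernel_intersection_general
    (n : ℕ)
    (P Q : Polynomial ℝ)
    (hPdeg : P.natDegree = 2 * n) (hQdeg : Q.natDegree = 2 * n)
    (hPpos : ∀ x : ℝ, 0 < P.eval x) (hQpos : ∀ x : ℝ, 0 < Q.eval x)
    (θ : ℝ → ℝ) (hθpos : ∀ x, 0 < θ x)
    (hθint : Integrable (fun x : ℝ => (1 + |x| ^ (2 * n)) * θ x)) :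
    ∃ D : Submodule ℝ ((Polynomial.degreeLT ℝ (2 * n)) × (Polynomial.degreeLT ℝ (2 * n))),
      (∀ p : (Polynomial.degreeLT ℝ (2 * n)) × (Polynomial.degreeLT ℝ (2 * n)),
        p ∈ D ↔
          ((∀ k ≤ 2 * n, ∫ x : ℝ, x ^ k *
              ((p.1 : Polynomial ℝ).eval x / P.eval x
                - (p.2 : Polynomial ℝ).eval x / Q.eval x) * θ x = 0) ∧
           (∀ k ≤ 2 * n, ∫ x : ℝ, x ^ k *
              ((p.1 : Polynomial ℝ).eval x * Q.eval x
                - (p.2 : Polynomial ℝ).eval x * P.eval x) * θ x / (Q.eval x) ^ 2 = 0))) ∧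
      Module.finrank ℝ D = (EuclideanDomain.gcd P Q).natDegree := by
  have hP0 : P ≠ 0 := fun h => by simpa [h] using hPpos 0
  have hQ0 : Q ≠ 0 := fun h => by simpa [h] using hQpos 0
  have hdeg : ∀ u ∈ degreeLT ℝ (2 * n), u.natDegree ≤ 2 * n := fun u hu =>
    natDegree_le_of_degree_le (mem_degreeLT.1 hu).le
  refine ⟨LinearMap.ker (crossMul (2 * n) P Q), fun p => ?_,
    finrank_ker_crossMul hP0 hQ0 hPdeg hQdeg⟩
  rw [LinearMap.mem_ker, crossMul_apply, sub_eq_zero]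
  exact (moments_eq_zero_iff_mul_eq_mul hθint hθpos hPpos hQpos hPdeg hQdeg
    (hdeg _ p.1.2) (hdeg _ p.2.2)).symm

/-- The intersection `D` of the kernels of the Jacobians of the generalized logarithmic
moment map and of the power moment map at a positive pair `(P,Q)` of degree-`2n`
polynomials is a linear subspace of `V_{2n−1} × V_{2n−1}` whose dimension equals the
degree of the greatest common divisor of `P` and `Q`. -/
theorem dimension_of_jacobian_kernel_intersection
    (n : ℕ) (hn : 1 ≤ n)
    (P Q : Polynomial ℝ)
    (hPdeg : P.natDegree = 2 * n) (hQdeg : Q.natDegree = 2 * n)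
    (hPpos : ∀ x : ℝ, 0 < P.eval x) (hQpos : ∀ x : ℝ, 0 < Q.eval x)
    (θ : ℝ → ℝ) (hθmeas : Measurable θ) (hθpos : ∀ x, 0 < θ x)
    (hθint : Integrable (fun x : ℝ => (1 + |x| ^ (2 * n)) * θ x)) :
    ∃ D : Submodule ℝ ((Polynomial.degreeLT ℝ (2 * n)) × (Polynomial.degreeLT ℝ (2 * n))),
      (∀ p : (Polynomial.degreeLT ℝ (2 * n)) × (Polynomial.degreeLT ℝ (2 * n)),
        p ∈ D ↔
          ((∀ k ≤ 2 * n, ∫ x : ℝ, x ^ k *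
              ((p.1 : Polynomial ℝ).eval x / P.eval x
                - (p.2 : Polynomial ℝ).eval x / Q.eval x) * θ x = 0) ∧
           (∀ k ≤ 2 * n, ∫ x : ℝ, x ^ k *
              ((p.1 : Polynomial ℝ).eval x * Q.eval x
                - (p.2 : Polynomial ℝ).eval x * P.eval x) * θ x / (Q.eval x) ^ 2 = 0))) ∧
      Module.finrank ℝ D = (EuclideanDomain.gcd P Q).natDegree :=
  dimension_of_jacobian_kernel_intersection_general n P Q hPdeg hQdeg hPpos hQpos θ hθpos hθint
end

section
/- Fix an integer n ≥ 1. Let P and P' be real polynomials of degree at most 2n that are strictly positive at every point of ℝ, and let θ : ℝ → ℝ be Lebesgue-measurable with θ(x) > 0 for all x and ∫ (1+|x|^{2n})(1 + log(1+|x|)) θ(x) dx < ∞. If ∫_ℝ x^k θ(x) log(P(x)/P'(x)) dx = 0 for every k = 0, 1, …, 2n, then P = P'. -/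
open MeasureTheory Polynomial Real

/-- The log of a positive polynomial of degree at most `N` grows at most like
`C * (1 + log (1 + |x|))`. -/
lemma abs_log_poly_bound (Q : Polynomial ℝ) (N : ℕ) (hdeg : Q.natDegree ≤ N)
    (hQ : ∀ x : ℝ, 0 < Q.eval x) :
    ∃ C : ℝ, ∀ x : ℝ, |Real.log (Q.eval x)| ≤ C * (1 + Real.log (1 + |x|)) := by
  obtain ⟨x₀, hx₀⟩ := Q.exists_forall_norm_le
  set m : ℝ := Q.eval x₀ with hm
  have hmpos : 0 < m := hQ x₀
  set S : ℝ := (∑ k ∈ Finset.range (N + 1), |Q.coeff k|) + 1 with hS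
  have hS1 : (1 : ℝ) ≤ S := by
    have : (0:ℝ) ≤ ∑ k ∈ Finset.range (N + 1), |Q.coeff k| :=
      Finset.sum_nonneg fun k _ => abs_nonneg _
    simp only [hS]; linarith
  refine ⟨Real.log S + |Real.log m| + N, fun x => ?_⟩
  have hℓ : 0 ≤ Real.log (1 + |x|) := Real.log_nonneg (by linarith [abs_nonneg x])
  have hbase : (1:ℝ) ≤ 1 + |x| := by linarith [abs_nonneg x]
  have hupper : Q.eval x ≤ S * (1 + |x|) ^ N := by
    have heval : Q.eval x = ∑ k ∈ Finset.range (N + 1), Q.coeff k * x ^ k :=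
      Q.eval_eq_sum_range' (lt_of_le_of_lt hdeg (Nat.lt_succ_self N)) x
    have hp : (0:ℝ) < (1 + |x|) ^ N := pow_pos (by linarith) N
    calc Q.eval x ≤ |Q.eval x| := le_abs_self _
      _ ≤ ∑ k ∈ Finset.range (N + 1), |Q.coeff k * x ^ k| := by
          rw [heval]; exact Finset.abs_sum_le_sum_abs _ _
      _ ≤ ∑ k ∈ Finset.range (N + 1), |Q.coeff k| * (1 + |x|) ^ N := by
          refine Finset.sum_le_sum fun k hk => ?_
          rw [abs_mul, abs_pow]
          refine mul_le_mul_of_nonneg_left ?_ (abs_nonneg _)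
          calc |x| ^ k ≤ (1 + |x|) ^ k :=
                pow_le_pow_left₀ (abs_nonneg x) (by linarith) k
            _ ≤ (1 + |x|) ^ N :=
                pow_le_pow_right₀ hbase (Nat.lt_succ_iff.mp (Finset.mem_range.mp hk))
      _ ≤ S * (1 + |x|) ^ N := by
          rw [← Finset.sum_mul]
          refine mul_le_mul_of_nonneg_right ?_ hp.le
          simp only [hS]; linarith
  have hlogS : 0 ≤ Real.log S := Real.log_nonneg hS1
  have hlog_up : Real.log (Q.eval x) ≤ Real.log S + N * Real.log (1 + |x|) := by
    calc Real.log (Q.eval x) ≤ Real.log (S * (1 + |x|) ^ N) :=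
          Real.log_le_log (hQ x) hupper
      _ = Real.log S + N * Real.log (1 + |x|) := by
          rw [Real.log_mul (by linarith) (by positivity), Real.log_pow]
  have hlog_low : Real.log m ≤ Real.log (Q.eval x) := by
    refine Real.log_le_log hmpos ?_
    have := hx₀ x
    rwa [Real.norm_eq_abs, Real.norm_eq_abs, abs_of_pos hmpos, abs_of_pos (hQ x)] at this
  have habs : -|Real.log m| ≤ Real.log (Q.eval x) :=
    le_trans (neg_abs_le _) hlog_low
  rw [abs_le]
  constructor
  · nlinarith [abs_nonneg (Real.log m), Nat.cast_nonneg (α := ℝ) N]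
  · nlinarith [abs_nonneg (Real.log m), Nat.cast_nonneg (α := ℝ) N]

/-- Injectivity of the generalized logarithmic moments in the numerator polynomial:
if positive polynomials `P`, `P'` of degree at most `2n` satisfy
`∫ x^k θ log(P/P') dx = 0` for `k = 0,…,2n`, then `P = P'`. -/
theorem logMoments_determine_numerator
    (n : ℕ) (hn : 1 ≤ n)
    (P P' : Polynomial ℝ)
    (hPdeg : P.natDegree ≤ 2 * n) (hP'deg : P'.natDegree ≤ 2 * n)
    (hPpos : ∀ x : ℝ, 0 < P.eval x) (hP'pos : ∀ x : ℝ, 0 < P'.eval x)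
    (θ : ℝ → ℝ) (hθmeas : Measurable θ) (hθpos : ∀ x, 0 < θ x)
    (hθint : Integrable (fun x : ℝ =>
      (1 + |x| ^ (2 * n)) * (1 + Real.log (1 + |x|)) * θ x))
    (h : ∀ k ≤ 2 * n, ∫ x : ℝ, x ^ k * θ x * Real.log (P.eval x / P'.eval x) = 0) :
    P = P' := by
  set L : ℝ → ℝ := fun x => Real.log (P.eval x / P'.eval x) with hLdef
  obtain ⟨C₁, hC₁⟩ := abs_log_poly_bound P (2 * n) hPdeg hPpos
  obtain ⟨C₂, hC₂⟩ := abs_log_poly_bound P' (2 * n) hP'deg hP'pos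
  have hLbound : ∀ x, |L x| ≤ (C₁ + C₂) * (1 + Real.log (1 + |x|)) := by
    intro x
    have hrw : L x = Real.log (P.eval x) - Real.log (P'.eval x) := by
      simp only [hLdef]
      exact Real.log_div (hPpos x).ne' (hP'pos x).ne'
    rw [hrw]
    calc |Real.log (P.eval x) - Real.log (P'.eval x)|
        ≤ |Real.log (P.eval x)| + |Real.log (P'.eval x)| := abs_sub _ _
      _ ≤ C₁ * (1 + Real.log (1 + |x|)) + C₂ * (1 + Real.log (1 + |x|)) :=
          add_le_add (hC₁ x) (hC₂ x)
      _ = (C₁ + C₂) * (1 + Real.log (1 + |x|)) := by ring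
  have hLmeas : Measurable L :=
    Real.measurable_log.comp (P.continuous.measurable.div P'.continuous.measurable)
  -- integrability of each moment integrand
  have hIntk : ∀ k, k ≤ 2 * n → Integrable (fun x : ℝ => x ^ k * θ x * L x) := by
    intro k hk
    refine (hθint.const_mul (C₁ + C₂)).mono' ?_ ?_
    · exact (((measurable_id.pow_const k).mul hθmeas).mul hLmeas).aestronglyMeasurable
    · refine Filter.Eventually.of_forall fun x => ?_
      have hxk : |x| ^ k ≤ 1 + |x| ^ (2 * n) := by
        rcases le_total (|x|) 1 with hx1 | hx1
        · have : |x| ^ k ≤ 1 := pow_le_one₀ (abs_nonneg x) hx1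
          have h2 : 0 ≤ |x| ^ (2 * n) := pow_nonneg (abs_nonneg x) _
          linarith
        · have : |x| ^ k ≤ |x| ^ (2 * n) := pow_le_pow_right₀ hx1 hk
          linarith
      have hℓ : 0 ≤ 1 + Real.log (1 + |x|) := by
        have := Real.log_nonneg (by linarith [abs_nonneg x] : (1:ℝ) ≤ 1 + |x|)
        linarith
      have hθx := (hθpos x).le
      have hb := hLbound x
      have habs : ‖x ^ k * θ x * L x‖ = |x| ^ k * θ x * |L x| := by
        rw [Real.norm_eq_abs, abs_mul, abs_mul, abs_pow, abs_of_pos (hθpos x)]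
      rw [habs]
      calc |x| ^ k * θ x * |L x|
          ≤ (1 + |x| ^ (2 * n)) * θ x * ((C₁ + C₂) * (1 + Real.log (1 + |x|))) := by
            have h1 : |x| ^ k * θ x ≤ (1 + |x| ^ (2 * n)) * θ x :=
              mul_le_mul_of_nonneg_right hxk hθx
            have h2 : 0 ≤ (1 + |x| ^ (2 * n)) * θ x := by positivity
            exact mul_le_mul h1 hb (abs_nonneg _) h2
        _ = (C₁ + C₂) * ((1 + |x| ^ (2 * n)) * (1 + Real.log (1 + |x|)) * θ x) := by ring
  -- the quadratic functional
  have hdegsub : (P - P').natDegree < 2 * n + 1 :=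
    Nat.lt_succ_of_le (le_trans (Polynomial.natDegree_sub_le P P') (max_le hPdeg hP'deg))
  have hFrep : ∀ x : ℝ, (P.eval x - P'.eval x) * θ x * L x
      = ∑ k ∈ Finset.range (2 * n + 1), (P - P').coeff k * (x ^ k * θ x * L x) := by
    intro x
    have heval : P.eval x - P'.eval x
        = ∑ k ∈ Finset.range (2 * n + 1), (P - P').coeff k * x ^ k := by
      rw [← Polynomial.eval_sub]
      exact (P - P').eval_eq_sum_range' hdegsub x
    rw [heval, Finset.sum_mul, Finset.sum_mul]
    exact Finset.sum_congr rfl fun k _ => by ring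
  have hintk' : ∀ k ∈ Finset.range (2 * n + 1),
      Integrable (fun x : ℝ => (P - P').coeff k * (x ^ k * θ x * L x)) := by
    intro k hk
    exact (hIntk k (Nat.lt_succ_iff.mp (Finset.mem_range.mp hk))).const_mul _
  have hFint : Integrable (fun x : ℝ => (P.eval x - P'.eval x) * θ x * L x) := by
    have := integrable_finset_sum (μ := volume) (Finset.range (2 * n + 1)) hintk'
    exact this.congr (Filter.EventuallyEq.of_eq (funext fun x => (hFrep x).symm))
  have hFzero : ∫ x : ℝ, (P.eval x - P'.eval x) * θ x * L x = 0 := by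
    rw [integral_congr_ae (Filter.EventuallyEq.of_eq (funext hFrep)),
      integral_finset_sum _ hintk']
    refine Finset.sum_eq_zero fun k hk => ?_
    rw [integral_const_mul, h k (Nat.lt_succ_iff.mp (Finset.mem_range.mp hk)), mul_zero]
  have hFnonneg : ∀ x : ℝ, 0 ≤ (P.eval x - P'.eval x) * θ x * L x := by
    intro x
    rcases le_total (P'.eval x) (P.eval x) with hc | hc
    · have h1 : 0 ≤ P.eval x - P'.eval x := by linarith
      have h2 : 0 ≤ L x := Real.log_nonneg ((one_le_div (hP'pos x)).mpr hc)
      exact mul_nonneg (mul_nonneg h1 (hθpos x).le) h2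
    · have h1 : P.eval x - P'.eval x ≤ 0 := by linarith
      have h2 : L x ≤ 0 :=
        Real.log_nonpos (div_nonneg (hPpos x).le (hP'pos x).le)
          ((div_le_one (hP'pos x)).mpr hc)
      { have h3 : (eval x P - eval x P') * θ x ≤ 0 := mul_nonpos_of_nonpos_of_nonneg h1 (hθpos x).le
        exact mul_nonneg_of_nonpos_of_nonpos h3 h2 }
  have hae : (fun x : ℝ => (P.eval x - P'.eval x) * θ x * L x) =ᵐ[volume] 0 :=
    (integral_eq_zero_iff_of_nonneg hFnonneg hFint).mp hFzero
  have hgae : (fun x : ℝ => (P.eval x - P'.eval x) * L x) =ᵐ[volume]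
      (fun _ => (0 : ℝ)) := by
    filter_upwards [hae] with x hx
    have hx' : (P.eval x - P'.eval x) * θ x * L x = 0 := hx
    rw [mul_right_comm] at hx'
    exact (mul_eq_zero.mp hx').resolve_right (hθpos x).ne'
  have hLcont : Continuous L := by
    refine Continuous.log (P.continuous.div P'.continuous fun x => (hP'pos x).ne') ?_
    exact fun x => (div_pos (hPpos x) (hP'pos x)).ne'
  have hgcont : Continuous (fun x : ℝ => (P.eval x - P'.eval x) * L x) :=
    (P.continuous.sub P'.continuous).mul hLcont
  have hg0 : ∀ x : ℝ, (P.eval x - P'.eval x) * L x = 0 := by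
    have := (Continuous.ae_eq_iff_eq volume hgcont continuous_const).mp hgae
    exact fun x => congrFun this x
  apply Polynomial.funext
  intro x
  by_contra hne
  have hx := hg0 x
  rcases lt_or_gt_of_ne hne with hlt | hgt
  · have hLneg : L x < 0 :=
      Real.log_neg (div_pos (hPpos x) (hP'pos x)) ((div_lt_one (hP'pos x)).mpr hlt)
    nlinarith
  · have hLpos : 0 < L x := Real.log_pos ((one_lt_div (hP'pos x)).mpr hgt)
    nlinarith
end

section
/- Fix an integer n ≥ 1. Let θ : ℝ → ℝ be Lebesgue-measurable with θ(x) > 0 for all x and ∫ (1+|x|^{2n}) θ(x) dx < ∞. Let P be a real polynomial of degree at most 2n that is strictly positive at every point of ℝ, and let Q and Q' be real polynomials of degree exactly 2n that are strictly positive at every point of ℝ. If ∫_ℝ x^k P(x)θ(x)/Q(x) dx = ∫_ℝ x^k P(x)θ(x)/Q'(x) dx for every k = 0, 1, …, 2n, then Q = Q'. -/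
open MeasureTheory Polynomial Real Filter

private lemma ratio_tendsto_atTop (A B : Polynomial ℝ) (hB0 : B ≠ 0)
    (hAB : A.natDegree ≤ B.natDegree) :
    ∃ L : ℝ, Tendsto (fun x : ℝ => A.eval x / B.eval x) atTop (nhds L) := by
  have hdeg : A.degree ≤ B.degree := by
    refine le_trans degree_le_natDegree ?_
    rw [degree_eq_natDegree hB0]
    exact_mod_cast hAB
  rcases lt_or_eq_of_le hdeg with hlt | heq
  · exact ⟨0, div_tendsto_zero_of_degree_lt A B hlt⟩
  · exact ⟨_, div_tendsto_leadingCoeff_div_of_degree_eq A B heq⟩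

private lemma ratio_bounded (A B : Polynomial ℝ) (hAB : A.natDegree ≤ B.natDegree)
    (hBpos : ∀ x : ℝ, 0 < B.eval x) :
    ∃ C : ℝ, 0 ≤ C ∧ ∀ x : ℝ, |A.eval x / B.eval x| ≤ C := by
  have hB0 : B ≠ 0 := fun h => by simpa [h] using hBpos 0
  set f : ℝ → ℝ := fun x => A.eval x / B.eval x with hf
  obtain ⟨L1, h1⟩ := ratio_tendsto_atTop A B hB0 hAB
  -- atBot limit via composition with negation
  obtain ⟨L2, h2⟩ : ∃ L : ℝ, Tendsto f atBot (nhds L) := by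
    set A' := A.comp (-X) with hA'def
    set B' := B.comp (-X) with hB'def
    have hA' : ∀ x : ℝ, A'.eval x = A.eval (-x) := fun x => by
      simp [hA'def, eval_comp]
    have hB' : ∀ x : ℝ, B'.eval x = B.eval (-x) := fun x => by
      simp [hB'def, eval_comp]
    have hB'0 : B' ≠ 0 := fun h => by
      have := hBpos 0
      rw [show (0:ℝ) = -0 by ring, ← hB' 0, h] at this
      simp at this
    have hdeg' : A'.natDegree ≤ B'.natDegree := by
      rw [hA'def, hB'def, natDegree_comp, natDegree_comp]
      have : (-X : Polynomial ℝ).natDegree = 1 := by simp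
      rw [this, mul_one, mul_one]
      exact hAB
    obtain ⟨L, hL⟩ := ratio_tendsto_atTop A' B' hB'0 hdeg'
    refine ⟨L, ?_⟩
    have := hL.comp tendsto_neg_atBot_atTop
    have heq : ((fun x : ℝ => A'.eval x / B'.eval x) ∘ fun x : ℝ => -x) = f := by
      funext x
      simp [Function.comp, hA', hB', hf]
    rwa [heq] at this
  have e1 : ∀ᶠ x in atTop, |f x| ≤ |L1| + 1 :=
    h1.abs.eventually (eventually_le_nhds (lt_add_one _))
  have e2 : ∀ᶠ x in atBot, |f x| ≤ |L2| + 1 :=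
    h2.abs.eventually (eventually_le_nhds (lt_add_one _))
  obtain ⟨a, ha⟩ := eventually_atTop.1 e1
  obtain ⟨b, hb⟩ := eventually_atBot.1 e2
  have hcont : ContinuousOn f (Set.Icc b a) :=
    ((A.continuous).div (B.continuous) (fun x => (hBpos x).ne')).continuousOn
  obtain ⟨C0, hC0⟩ := (isCompact_Icc).exists_bound_of_continuousOn hcont
  refine ⟨max C0 (max (|L1| + 1) (|L2| + 1)), ?_, fun x => ?_⟩
  · have : (0:ℝ) ≤ |L1| + 1 := by positivity
    exact this.trans ((le_max_left _ _).trans (le_max_right _ _))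
  · rcases le_total x b with hxb | hbx
    · exact (hb x hxb).trans ((le_max_right _ _).trans (le_max_right _ _))
    rcases le_total a x with hax | hxa
    · exact (ha x hax).trans ((le_max_left _ _).trans (le_max_right _ _))
    · have := hC0 x ⟨hbx, hxa⟩
      rw [Real.norm_eq_abs] at this
      exact this.trans (le_max_left _ _)

private lemma integrable_ratio (n : ℕ) (hn : 1 ≤ n) (θ : ℝ → ℝ)
    (hθmeas : Measurable θ) (hθpos : ∀ x, 0 < θ x)
    (hθint : Integrable (fun x : ℝ => (1 + |x| ^ (2 * n)) * θ x))
    (A B : Polynomial ℝ) (hAB : A.natDegree ≤ B.natDegree + 2 * n)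
    (hBpos : ∀ x : ℝ, 0 < B.eval x) :
    Integrable (fun x : ℝ => A.eval x * θ x / B.eval x) := by
  have hB0 : B ≠ 0 := fun h => by simpa [h] using hBpos 0
  set T : Polynomial ℝ := B * (X ^ (2 * n) + C 1) with hTdef
  have hTpos : ∀ x : ℝ, 0 < T.eval x := by
    intro x
    have hx : (0:ℝ) ≤ x ^ (2 * n) := even_two_mul n |>.pow_nonneg x
    have : (0:ℝ) < x ^ (2 * n) + 1 := by linarith
    simp only [hTdef, eval_mul, eval_add, eval_pow, eval_X, eval_C]
    exact mul_pos (hBpos x) this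
  have hT0 : (X ^ (2 * n) + C (1:ℝ)) ≠ 0 := fun h => by
    have h2 := natDegree_X_pow_add_C (n := 2 * n) (r := (1:ℝ))
    rw [h] at h2
    simp at h2
    omega
  have hTdeg : T.natDegree = B.natDegree + 2 * n := by
    rw [hTdef, natDegree_mul hB0 hT0, natDegree_X_pow_add_C]
  obtain ⟨C1, hC1nonneg, hC1⟩ := ratio_bounded A T (by rw [hTdeg]; exact hAB) hTpos
  have key : ∀ x : ℝ, |A.eval x / B.eval x| ≤ C1 * (1 + |x| ^ (2 * n)) := by
    intro x
    have hpow : |x| ^ (2 * n) = x ^ (2 * n) := (even_two_mul n).pow_abs x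
    have h1x : (0:ℝ) < x ^ (2 * n) + 1 := by
      have h0 : (0:ℝ) ≤ x ^ (2 * n) := (even_two_mul n).pow_nonneg x
      linarith
    have hTx : T.eval x = B.eval x * (x ^ (2 * n) + 1) := by
      simp [hTdef]
    have := hC1 x
    rw [hTx] at this
    have habs : |A.eval x / B.eval x| = |A.eval x / (B.eval x * (x ^ (2 * n) + 1))| *
        (x ^ (2 * n) + 1) := by
      rw [div_mul_eq_div_div, abs_div (A.eval x / B.eval x), abs_of_pos h1x,
        div_mul_cancel₀ _ h1x.ne']
    rw [habs, hpow]
    calc |A.eval x / (B.eval x * (x ^ (2 * n) + 1))| * (x ^ (2 * n) + 1)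
        ≤ C1 * (x ^ (2 * n) + 1) := by
          exact mul_le_mul_of_nonneg_right this h1x.le
      _ = C1 * (1 + x ^ (2 * n)) := by ring
  have hmeas : AEStronglyMeasurable (fun x : ℝ => A.eval x * θ x / B.eval x) volume := by
    exact ((A.continuous.measurable.mul hθmeas).div B.continuous.measurable).aestronglyMeasurable
  refine Integrable.mono (hθint.const_mul C1) hmeas ?_
  filter_upwards with x
  rw [Real.norm_eq_abs, Real.norm_eq_abs]
  have hrw : A.eval x * θ x / B.eval x = (A.eval x / B.eval x) * θ x := by ring
  rw [hrw, abs_mul, abs_of_pos (hθpos x)]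
  have hrhs : |C1 * ((1 + |x| ^ (2 * n)) * θ x)| = C1 * (1 + |x| ^ (2 * n)) * θ x := by
    rw [abs_of_nonneg]
    · ring
    · have h1 : (0:ℝ) ≤ 1 + |x| ^ (2 * n) := by positivity
      exact mul_nonneg hC1nonneg (mul_nonneg h1 (hθpos x).le)
  rw [hrhs]
  exact mul_le_mul_of_nonneg_right (key x) (hθpos x).le

/-- Injectivity of the power moments in the denominator polynomial: for a fixed positive
numerator `P` of degree at most `2n`, if positive polynomials `Q`, `Q'` of degree exactly
`2n` give the same power moments `∫ x^k Pθ/Q dx` for `k = 0,…,2n`, then `Q = Q'`. -/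
theorem powerMoments_determine_denominator
    (n : ℕ) (hn : 1 ≤ n)
    (θ : ℝ → ℝ) (hθmeas : Measurable θ) (hθpos : ∀ x, 0 < θ x)
    (hθint : Integrable (fun x : ℝ => (1 + |x| ^ (2 * n)) * θ x))
    (P Q Q' : Polynomial ℝ)
    (hPdeg : P.natDegree ≤ 2 * n)
    (hQdeg : Q.natDegree = 2 * n) (hQ'deg : Q'.natDegree = 2 * n)
    (hPpos : ∀ x : ℝ, 0 < P.eval x)
    (hQpos : ∀ x : ℝ, 0 < Q.eval x) (hQ'pos : ∀ x : ℝ, 0 < Q'.eval x)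
    (h : ∀ k ≤ 2 * n,
      (∫ x : ℝ, x ^ k * P.eval x * θ x / Q.eval x) =
        ∫ x : ℝ, x ^ k * P.eval x * θ x / Q'.eval x) :
    Q = Q' := by
  have hP0 : P ≠ 0 := fun hc => by simpa [hc] using hPpos 0
  have hQ0 : Q ≠ 0 := fun hc => by simpa [hc] using hQpos 0
  have hQ'0 : Q' ≠ 0 := fun hc => by simpa [hc] using hQ'pos 0
  -- Integrability of each monomial moment integrand against a positive denominator
  have hint : ∀ (k : ℕ), k ≤ 2 * n → ∀ (S : Polynomial ℝ), S.natDegree = 2 * n →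
      (∀ x : ℝ, 0 < S.eval x) →
      Integrable (fun x : ℝ => x ^ k * P.eval x * θ x / S.eval x) := by
    intro k hk S hSdeg hSpos
    have hdeg : (X ^ k * P).natDegree ≤ S.natDegree + 2 * n := by
      rw [natDegree_mul (pow_ne_zero k X_ne_zero) hP0, natDegree_X_pow, hSdeg]
      omega
    have := integrable_ratio n hn θ hθmeas hθpos hθint (X ^ k * P) S hdeg hSpos
    simpa [eval_mul, eval_pow] using this
  -- Equal integrals against any polynomial of degree ≤ 2n
  have hkey : ∀ R : Polynomial ℝ, R.natDegree ≤ 2 * n →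
      (∫ x : ℝ, R.eval x * P.eval x * θ x / Q.eval x) =
        ∫ x : ℝ, R.eval x * P.eval x * θ x / Q'.eval x := by
    intro R hR
    have expand : ∀ (S : Polynomial ℝ), (∀ x : ℝ, 0 < S.eval x) → S.natDegree = 2 * n →
        (∫ x : ℝ, R.eval x * P.eval x * θ x / S.eval x) =
          ∑ k ∈ Finset.range (2 * n + 1),
            R.coeff k * ∫ x : ℝ, x ^ k * P.eval x * θ x / S.eval x := by
      intro S hSpos hSdeg
      have hlt : R.natDegree < 2 * n + 1 := Nat.lt_succ_of_le hR
      have step1 : (∫ x : ℝ, R.eval x * P.eval x * θ x / S.eval x) =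
          ∫ x : ℝ, ∑ k ∈ Finset.range (2 * n + 1),
            R.coeff k * (x ^ k * P.eval x * θ x / S.eval x) := by
        congr 1
        funext x
        rw [eval_eq_sum_range' hlt, Finset.sum_mul, Finset.sum_mul, Finset.sum_div]
        refine Finset.sum_congr rfl fun k _ => ?_
        ring
      rw [step1, integral_finset_sum]
      · refine Finset.sum_congr rfl fun k hk => ?_
        rw [MeasureTheory.integral_const_mul]
      · intro k hk
        exact (hint k (by simpa using Nat.lt_succ_iff.mp (Finset.mem_range.mp hk)) S hSdeg
          hSpos).const_mul _
    rw [expand Q hQpos hQdeg, expand Q' hQ'pos hQ'deg]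
    refine Finset.sum_congr rfl fun k hk => ?_
    rw [h k (Nat.lt_succ_iff.mp (Finset.mem_range.mp hk))]
  -- Apply to R = Q - Q'
  set R : Polynomial ℝ := Q - Q' with hRdef
  have hRdeg : R.natDegree ≤ 2 * n := by
    refine (natDegree_sub_le Q Q').trans ?_
    rw [hQdeg, hQ'deg]; omega
  have hRint := hkey R hRdeg
  -- The nonnegative function F
  set F : ℝ → ℝ := fun x => (R.eval x) ^ 2 * P.eval x * θ x / (Q.eval x * Q'.eval x) with hFdef
  have hFnonneg : ∀ x, 0 ≤ F x := by
    intro x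
    have := sq_nonneg (R.eval x)
    have hnum : 0 ≤ (R.eval x) ^ 2 * P.eval x * θ x :=
      mul_nonneg (mul_nonneg this (hPpos x).le) (hθpos x).le
    exact div_nonneg hnum (mul_pos (hQpos x) (hQ'pos x)).le
  have hFint : Integrable F := by
    have hnum0 : (R ^ 2 * P).natDegree ≤ (Q * Q').natDegree + 2 * n := by
      rw [natDegree_mul hQ0 hQ'0, hQdeg, hQ'deg]
      calc (R ^ 2 * P).natDegree ≤ (R ^ 2).natDegree + P.natDegree := natDegree_mul_le
        _ ≤ 2 * R.natDegree + P.natDegree := by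
            rw [natDegree_pow]
        _ ≤ 2 * (2 * n) + 2 * n := by omega
        _ = 2 * n + 2 * n + 2 * n := by ring
    have hQQ'pos : ∀ x : ℝ, 0 < (Q * Q').eval x := fun x => by
      rw [eval_mul]; exact mul_pos (hQpos x) (hQ'pos x)
    have := integrable_ratio n hn θ hθmeas hθpos hθint (R ^ 2 * P) (Q * Q') hnum0 hQQ'pos
    simpa [hFdef, eval_mul, eval_pow] using this
  -- ∫ F = 0
  have hFzero : (∫ x : ℝ, F x) = 0 := by
    have hptwise : ∀ x : ℝ, F x =
        R.eval x * P.eval x * θ x / Q'.eval x - R.eval x * P.eval x * θ x / Q.eval x := by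
      intro x
      have hQx := (hQpos x).ne'
      have hQ'x := (hQ'pos x).ne'
      have hRx : R.eval x = Q.eval x - Q'.eval x := by simp [hRdef]
      rw [hFdef]
      simp only
      rw [hRx]
      field_simp
    have : (∫ x : ℝ, F x) =
        (∫ x : ℝ, R.eval x * P.eval x * θ x / Q'.eval x) -
          ∫ x : ℝ, R.eval x * P.eval x * θ x / Q.eval x := by
      rw [← integral_sub]
      · congr 1; funext x; exact hptwise x
      · have hdeg : (R * P).natDegree ≤ Q'.natDegree + 2 * n := by
          refine natDegree_mul_le.trans ?_
          rw [hQ'deg]; omega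
        have := integrable_ratio n hn θ hθmeas hθpos hθint (R * P) Q' hdeg hQ'pos
        simpa [eval_mul] using this
      · have hdeg : (R * P).natDegree ≤ Q.natDegree + 2 * n := by
          refine natDegree_mul_le.trans ?_
          rw [hQdeg]; omega
        have := integrable_ratio n hn θ hθmeas hθpos hθint (R * P) Q hdeg hQpos
        simpa [eval_mul] using this
    rw [this, hRint, sub_self]
  -- F = 0 a.e., hence R.eval = 0 a.e.
  have hFae : F =ᵐ[volume] 0 :=
    (integral_eq_zero_iff_of_nonneg hFnonneg hFint).mp hFzero
  have hRae : ∀ᵐ x : ℝ, R.eval x = 0 := by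
    filter_upwards [hFae] with x hx
    simp only [Pi.zero_apply] at hx
    rw [hFdef] at hx
    simp only at hx
    have hQQ' : Q.eval x * Q'.eval x ≠ 0 := (mul_pos (hQpos x) (hQ'pos x)).ne'
    rw [_root_.div_eq_zero_iff] at hx
    rcases hx with hx | hx
    · have hPθ : P.eval x * θ x ≠ 0 := (mul_pos (hPpos x) (hθpos x)).ne'
      have : (R.eval x) ^ 2 * (P.eval x * θ x) = 0 := by rw [← mul_assoc]; exact hx
      rcases mul_eq_zero.mp this with h' | h'
      · exact pow_eq_zero_iff (two_ne_zero) |>.mp h'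
      · exact absurd h' hPθ
    · exact absurd hx hQQ'
  -- conclude R = 0
  have hR0 : R = 0 := by
    by_contra hne
    have hfin : {x : ℝ | R.IsRoot x}.Finite := finite_setOf_isRoot hne
    have hzero : volume {x : ℝ | R.eval x = 0} = 0 := hfin.measure_zero volume
    have hcompl : volume {x : ℝ | ¬ (R.eval x = 0)} = 0 := ae_iff.mp hRae
    have hunion : (Set.univ : Set ℝ) ⊆ {x : ℝ | R.eval x = 0} ∪ {x : ℝ | ¬ (R.eval x = 0)} := by
      intro x _
      by_cases hx : R.eval x = 0
      · exact Or.inl hx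
      · exact Or.inr hx
    have : volume (Set.univ : Set ℝ) ≤ 0 := by
      calc volume (Set.univ : Set ℝ)
          ≤ volume ({x : ℝ | R.eval x = 0} ∪ {x : ℝ | ¬ (R.eval x = 0)}) := measure_mono hunion
        _ ≤ volume {x : ℝ | R.eval x = 0} + volume {x : ℝ | ¬ (R.eval x = 0)} :=
            measure_union_le _ _
        _ = 0 := by rw [hzero, hcompl, add_zero]
    simp [Real.volume_univ] at this
  rw [hRdef, sub_eq_zero] at hR0
  exact hR0
end
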